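/- arXiv:2412.19749 — 5 statements merged into one kernel-verified Lean document; each statement's English description precedes it below -/
import Mathlib

section
/- Let (W,S) be a Coxeter system with a realization V over a commutative domain 𝕜 ⊆ ℝ, and suppose W preserves the almost-orthant for k spanned by (X,H). Then for any simple reflection s ∈ S, either s acts trivially on V, or there exist x ≠ y in X, an element b ∈ k₊ that is invertible with inverse in k₊, and ħ in the k-span of H, such that s(x) = b·y + ħ and s(z) = z for every z ∈ X \ {x,y}. Moreover the quadruple (x,y,b,ħ) is unique up to the symmetry (x,y,b,ħ) ↔ (y,x,b⁻¹,−b⁻¹ħ). -/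
open Function

noncomputable section

/-- The subring `ℤ ⊆ ℝ` of integers, used to specialize the base subring `k` to `ℤ`. -/
def intSubring : Subring ℝ := (Int.castRingHom ℝ).range

/-- A *realization* of a Coxeter system `cs : CoxeterSystem M W` over a commutative domain
`𝕜 ⊆ ℝ` (encoded as a subring of `ℝ`): a `𝕜`-module `V` together with simple roots
`root b ∈ V` and simple coroots `coroot b ∈ V*`, and a linear action `ρ` of `W` on `V`
for which each simple reflection acts by the reflection formula
`s(v) = v - ⟨coroot s, v⟩ • root s`. -/
structure Realization (𝕜 : Subring ℝ) {B W : Type*} [Group W]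
    (M : CoxeterMatrix B) (cs : CoxeterSystem M W)
    (V : Type*) [AddCommGroup V] [Module 𝕜 V] where
  root : B → V
  coroot : B → (V →ₗ[𝕜] 𝕜)
  ρ : W →* (V ≃ₗ[𝕜] V)
  coroot_root_self : ∀ b, coroot b (root b) = 2
  coroot_root_eq_zero_iff : ∀ b b', b ≠ b' → (coroot b (root b') = 0 ↔ M.M b b' = 2)
  simple_act : ∀ (b : B) (v : V), ρ (cs.simple b) v = v - coroot b v • root b

variable {𝕜 : Subring ℝ}

/-- `c ∈ k₊ := k ∩ ℝ_{≥0}`, for an element `c` of the base domain `𝕜 ⊆ ℝ`. -/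
def InKPlus (k : Subring ℝ) (c : 𝕜) : Prop := (c : ℝ) ∈ k ∧ 0 ≤ (c : ℝ)

/-- The almost-orthant spanned by `(X, H)`, where `X` is the `Sum.inl` part of the `𝕜`-basis
`e` and `H` is the `Sum.inr` part: all elements of `V` whose `X`-coordinates lie in
`k₊ = k ∩ ℝ_{≥0}` and whose `H`-coordinates lie in `k`.  (When the `Sum.inr` index type is
empty, this is the orthant spanned by the basis.) -/
def almostOrthant {V ι η : Type*} [AddCommGroup V] [Module 𝕜 V] (k : Subring ℝ)
    (e : Module.Basis (ι ⊕ η) 𝕜 V) : Set V :=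
  {v | (∀ p, (e.repr v p : ℝ) ∈ k) ∧ ∀ i : ι, 0 ≤ (e.repr v (Sum.inl i) : ℝ)}

/-- The data witnessing that the Coxeter group `W`, acting via the realization `r`, preserves
a `k`-lattice (the `k`-span of the `𝕜`-basis `e` of `V`, whose `k`-basis is
`X ∪ H = {e (Sum.inl i)} ∪ {e (Sum.inr j)}`) together with the almost-orthant spanned by
`(X, H)` inside it; each element of `H` is required to be `W`-invariant. -/
structure OrthantSetup (𝕜 k : Subring ℝ) {B W : Type*} [Group W]
    {M : CoxeterMatrix B} {cs : CoxeterSystem M W}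
    {V : Type*} [AddCommGroup V] [Module 𝕜 V]
    (r : Realization 𝕜 M cs V) (ι η : Type*) where
  hk : k ≤ 𝕜
  e : Module.Basis (ι ⊕ η) 𝕜 V
  invariant : ∀ (j : η) (w : W), r.ρ w (e (Sum.inr j)) = e (Sum.inr j)
  lattice_stable : ∀ (w : W) (v : V), (∀ p, ((e.repr v p : ℝ)) ∈ k) →
    ∀ p, ((e.repr (r.ρ w v) p : ℝ)) ∈ k
  orthant_stable : ∀ (w : W), ∀ v ∈ almostOrthant k e, r.ρ w v ∈ almostOrthant k e

namespace OrthantSetup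

variable {𝕜 k : Subring ℝ} {B W : Type*} [Group W] {M : CoxeterMatrix B}
  {cs : CoxeterSystem M W} {V : Type*} [AddCommGroup V] [Module 𝕜 V]
  {r : Realization 𝕜 M cs V} {ι η : Type*}

/-- The element `xᵢ` of `X`. -/
def X (d : OrthantSetup 𝕜 k r ι η) (i : ι) : V := d.e (Sum.inl i)

/-- The element `ħⱼ` of `H`. -/
def hbar (d : OrthantSetup 𝕜 k r ι η) (j : η) : V := d.e (Sum.inr j)

/-- `v` lies in the `k`-span of `H`. -/
def InHSpan (d : OrthantSetup 𝕜 k r ι η) (v : V) : Prop :=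
  (∀ i : ι, d.e.repr v (Sum.inl i) = 0) ∧ ∀ j : η, ((d.e.repr v (Sum.inr j) : ℝ)) ∈ k

/-- The set `Xₛ ⊆ X` (identified with a set of indices) of elements of `X` moved by the
simple reflection with index `b`. -/
def moved (d : OrthantSetup 𝕜 k r ι η) (b : B) : Set ι :=
  {i | r.ρ (cs.simple b) (d.X i) ≠ d.X i}

/-- `g` acts on `V` as a *rescaled shifted transposition* transposing `xᵢ` and `xⱼ`:
`g xᵢ = c • xⱼ + h` and `g xⱼ = c⁻¹ • (xᵢ - h)` for some `c ∈ k₊` invertible with inverse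
in `k₊` and some `h` in the `k`-span of `H`, while `g` fixes all other elements of `X`. -/
def IsRST (d : OrthantSetup 𝕜 k r ι η) (g : V ≃ₗ[𝕜] V) (i j : ι) : Prop :=
  i ≠ j ∧ ∃ (c c' : 𝕜) (h : V), InKPlus k c ∧ InKPlus k c' ∧ c * c' = 1 ∧
    d.InHSpan h ∧ g (d.X i) = c • d.X j + h ∧ g (d.X j) = c' • (d.X i - h) ∧
    ∀ z : ι, z ≠ i → z ≠ j → g (d.X z) = d.X z

/-- The transposition graph: vertices are (the indices of) the elements of `X`, and two
distinct vertices are adjacent when some simple reflection moves both of the corresponding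
elements of `X` (i.e. they form the set `Xₛ` for some `s ∈ S`). -/
def transGraph (d : OrthantSetup 𝕜 k r ι η) : SimpleGraph ι where
  Adj i j := i ≠ j ∧ ∃ b : B, i ∈ d.moved b ∧ j ∈ d.moved b
  symm := by
    constructor
    intro i j h
    exact ⟨h.1.symm, h.2.choose, h.2.choose_spec.2, h.2.choose_spec.1⟩
  loopless := by
    constructor
    intro i h
    exact h.1 rfl

end OrthantSetup


section Aux

set_option maxHeartbeats 1000000
set_option synthInstance.maxHeartbeats 1000000

variable {𝕜 k : Subring ℝ} {B W : Type*} [Group W] {M : CoxeterMatrix B}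
  {cs : CoxeterSystem M W} {V : Type*} [AddCommGroup V] [Module 𝕜 V]
  {r : Realization 𝕜 M cs V} {ι η : Type*}

lemma aux_repr (d : OrthantSetup 𝕜 k r ι η) {b : B} {φ : V →ₗ[𝕜] 𝕜} {α : V}
    (hs : ∀ v, r.ρ (cs.simple b) v = v - φ v • α) (v : V) (p : ι ⊕ η) :
    d.e.repr (r.ρ (cs.simple b) v) p = d.e.repr v p - φ v * d.e.repr α p := by
  rw [hs, map_sub, map_smul, Finsupp.sub_apply, Finsupp.smul_apply, smul_eq_mul]

lemma aux_hbar0 (d : OrthantSetup 𝕜 k r ι η) {b : B} {φ : V →ₗ[𝕜] 𝕜} {α : V}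
    (hs : ∀ v, r.ρ (cs.simple b) v = v - φ v • α) {p₀ : ι ⊕ η}
    (hα : d.e.repr α p₀ ≠ 0) (j : η) : φ (d.e (Sum.inr j)) = 0 := by
  have h1 : φ (d.e (Sum.inr j)) • α = 0 := by
    have h := d.invariant j (cs.simple b)
    rw [hs] at h
    exact sub_eq_self.mp h
  have h2 : φ (d.e (Sum.inr j)) * d.e.repr α p₀ = 0 := by
    have h3 := congrArg (fun v => d.e.repr v p₀) h1
    simpa [smul_eq_mul] using h3
  have h3 : (φ (d.e (Sum.inr j)) : ℝ) * (d.e.repr α p₀ : ℝ) = 0 := by exact_mod_cast h2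
  have h4 : (d.e.repr α p₀ : ℝ) ≠ 0 := by exact_mod_cast hα
  rcases mul_eq_zero.mp h3 with h | h
  · exact_mod_cast h
  · exact absurd h h4

lemma aux_sum (d : OrthantSetup 𝕜 k r ι η) {b : B} {φ : V →ₗ[𝕜] 𝕜} {α : V}
    (hs : ∀ v, r.ρ (cs.simple b) v = v - φ v • α) (hφα : φ α = 2) {p₀ : ι ⊕ η}
    (hα : d.e.repr α p₀ ≠ 0) :
    (2 : ℝ) = ∑ p ∈ (d.e.repr α).support, ((d.e.repr α p : ℝ) * (φ (d.e p) : ℝ)) := by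
  have h1 : (2 : 𝕜) = ∑ p ∈ (d.e.repr α).support, d.e.repr α p * φ (d.e p) := by
    rw [← hφα]
    conv_lhs => rw [← d.e.linearCombination_repr α]
    rw [Finsupp.linearCombination_apply, Finsupp.sum, map_sum]
    simp [smul_eq_mul]
  have h2 : ((2 : 𝕜) : ℝ) = (((∑ p ∈ (d.e.repr α).support, d.e.repr α p * φ (d.e p)) : 𝕜) : ℝ) := by
    exact_mod_cast congrArg (fun x : 𝕜 => (x : ℝ)) h1
  push_cast at h2
  convert h2 using 1
  norm_cast

lemma aux_key (d : OrthantSetup 𝕜 k r ι η) (b : B) (φ : V →ₗ[𝕜] 𝕜) (α : V)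
    (hs : ∀ v, r.ρ (cs.simple b) v = v - φ v • α)
    (hφα : φ α = 2) (z₀ : ι)
    (ht0 : 0 < ((φ (d.e (Sum.inl z₀)) : ℝ)))
    (ha0 : 0 < ((d.e.repr α (Sum.inl z₀) : ℝ))) :
    ∃ (i j : ι) (c : 𝕜) (h : V),
      i ≠ j ∧ InKPlus k c ∧ (∃ c' : 𝕜, InKPlus k c' ∧ c * c' = 1) ∧ d.InHSpan h ∧
      r.ρ (cs.simple b) (d.X i) = c • d.X j + h ∧
      (∀ z : ι, z ≠ i → z ≠ j → r.ρ (cs.simple b) (d.X z) = d.X z) ∧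
      (∀ (i₂ j₂ : ι) (c₂ : 𝕜) (h₂ : V),
        i₂ ≠ j₂ → InKPlus k c₂ → d.InHSpan h₂ →
        r.ρ (cs.simple b) (d.X i₂) = c₂ • d.X j₂ + h₂ →
        (∀ z : ι, z ≠ i₂ → z ≠ j₂ → r.ρ (cs.simple b) (d.X z) = d.X z) →
        ((i₂ = i ∧ j₂ = j ∧ c₂ = c ∧ h₂ = h) ∨
         (i₂ = j ∧ j₂ = i ∧ c₂ * c = 1 ∧ h₂ = -(c₂ • h)))) := by
  classical
  have hX : ∀ i : ι, d.X i = d.e (Sum.inl i) := fun _ => rfl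
  have hrepr : ∀ (v : V) (p : ι ⊕ η),
      d.e.repr (r.ρ (cs.simple b) v) p = d.e.repr v p - φ v * d.e.repr α p :=
    aux_repr d hs
  -- basis vectors lie in the almost-orthant
  have hXmem : ∀ i : ι, d.e (Sum.inl i) ∈ almostOrthant k d.e := by
    intro i
    constructor
    · intro p
      rw [d.e.repr_self, Finsupp.single_apply]
      split_ifs <;> simp [k.one_mem, k.zero_mem]
    · intro z
      rw [d.e.repr_self, Finsupp.single_apply]
      split_ifs <;> norm_num
  have hstab : ∀ i : ι, r.ρ (cs.simple b) (d.e (Sum.inl i)) ∈ almostOrthant k d.e :=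
    fun i => d.orthant_stable (cs.simple b) _ (hXmem i)
  have hkc : ∀ (w : ι) (p : ι ⊕ η),
      ((d.e.repr (r.ρ (cs.simple b) (d.e (Sum.inl w))) p : ℝ)) ∈ k :=
    fun w p => (hstab w).1 p
  -- the basic inequalities
  have hbound' : ∀ w z : ι, z ≠ w →
      ((φ (d.e (Sum.inl w)) : ℝ)) * ((d.e.repr α (Sum.inl z) : ℝ)) ≤ 0 := by
    intro w z hzw
    have h0 := (hstab w).2 z
    rw [hrepr] at h0
    rw [d.e.repr_self, Finsupp.single_apply, if_neg (by simpa using Ne.symm hzw)] at h0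
    push_cast at h0
    linarith
  have hbound1 : ∀ w : ι,
      ((φ (d.e (Sum.inl w)) : ℝ)) * ((d.e.repr α (Sum.inl w) : ℝ)) ≤ 1 := by
    intro w
    have h0 := (hstab w).2 w
    rw [hrepr] at h0
    rw [d.e.repr_self, Finsupp.single_apply, if_pos rfl] at h0
    push_cast at h0
    linarith
  -- the support sum
  have ha0ne : d.e.repr α (Sum.inl z₀) ≠ 0 := by
    intro hcon
    rw [hcon] at ha0
    norm_num at ha0
  have hhbar : ∀ j : η, φ (d.e (Sum.inr j)) = 0 := aux_hbar0 d hs ha0ne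
  have hsum := aux_sum d hs hφα ha0ne
  have hmemS0 : Sum.inl z₀ ∈ (d.e.repr α).support := Finsupp.mem_support_iff.mpr ha0ne
  have hsplit := Finset.add_sum_erase (d.e.repr α).support
      (fun p => ((d.e.repr α p : ℝ) * (φ (d.e p) : ℝ))) hmemS0
  beta_reduce at hsplit
  have hrest : 0 < ∑ p ∈ (d.e.repr α).support.erase (Sum.inl z₀),
      ((d.e.repr α p : ℝ) * (φ (d.e p) : ℝ)) := by
    nlinarith [hbound1 z₀, hsum, hsplit]
  obtain ⟨p₁, hp₁S, hp₁⟩ : ∃ p ∈ (d.e.repr α).support.erase (Sum.inl z₀),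
      0 < ((d.e.repr α p : ℝ) * (φ (d.e p) : ℝ)) := by
    by_contra hcon
    push_neg at hcon
    have := Finset.sum_nonpos hcon
    linarith
  obtain ⟨z₁, rfl⟩ : ∃ z, p₁ = Sum.inl z := by
    rcases p₁ with z | j
    · exact ⟨z, rfl⟩
    · rw [hhbar j] at hp₁
      norm_num at hp₁
  have hz₁ne : z₁ ≠ z₀ := by
    intro hcon
    subst hcon
    exact absurd (Finset.mem_erase.mp hp₁S).1 (by simp)
  -- sign information
  have hA1 : ∀ w : ι, w ≠ z₀ → ((φ (d.e (Sum.inl w)) : ℝ)) ≤ 0 := by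
    intro w hw
    nlinarith [hbound' w z₀ (Ne.symm hw)]
  have hA2 : ∀ z : ι, z ≠ z₀ → ((d.e.repr α (Sum.inl z) : ℝ)) ≤ 0 := by
    intro z hz
    nlinarith [hbound' z₀ z hz]
  have ht1 : ((φ (d.e (Sum.inl z₁)) : ℝ)) < 0 := by
    rcases lt_or_eq_of_le (hA1 z₁ hz₁ne) with h | h
    · exact h
    · rw [h] at hp₁; norm_num at hp₁
  have ha1 : ((d.e.repr α (Sum.inl z₁) : ℝ)) < 0 := by
    rcases lt_or_eq_of_le (hA2 z₁ hz₁ne) with h | h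
    · exact h
    · rw [h] at hp₁; norm_num at hp₁
  -- vanishing outside {z₀, z₁}
  have hA3 : ∀ u : ι, u ≠ z₀ → u ≠ z₁ → d.e.repr α (Sum.inl u) = 0 := by
    intro u hu0 hu1
    have h1 := hbound' z₁ u hu1
    have h2 := hA2 u hu0
    have h3 : ((d.e.repr α (Sum.inl u) : ℝ)) = 0 := by nlinarith
    exact_mod_cast h3
  have hA4 : ∀ u : ι, u ≠ z₀ → u ≠ z₁ → φ (d.e (Sum.inl u)) = 0 := by
    intro u hu0 hu1
    have h1 := hbound' u z₁ (fun hcon => hu1 hcon.symm)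
    have h2 := hA1 u hu0
    have h3 : ((φ (d.e (Sum.inl u)) : ℝ)) = 0 := by nlinarith
    exact_mod_cast h3
  -- the sum reduces to two terms, each equal to 1
  have hmemS1 : Sum.inl z₁ ∈ (d.e.repr α).support := (Finset.mem_erase.mp hp₁S).2
  have hsum2 : (2 : ℝ) = (d.e.repr α (Sum.inl z₀) : ℝ) * (φ (d.e (Sum.inl z₀)) : ℝ)
      + (d.e.repr α (Sum.inl z₁) : ℝ) * (φ (d.e (Sum.inl z₁)) : ℝ) := by
    have hsub : ({Sum.inl z₀, Sum.inl z₁} : Finset (ι ⊕ η)) ⊆ (d.e.repr α).support := by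
      intro p hp
      rcases Finset.mem_insert.mp hp with h | h
      · rw [h]; exact hmemS0
      · rw [Finset.mem_singleton.mp h]; exact hmemS1
    have hvan : ∀ p ∈ (d.e.repr α).support, p ∉ ({Sum.inl z₀, Sum.inl z₁} : Finset (ι ⊕ η)) →
        ((d.e.repr α p : ℝ) * (φ (d.e p) : ℝ)) = 0 := by
      intro p _ hp
      rcases p with u | j
      · have hu0 : u ≠ z₀ := by rintro rfl; exact hp (by simp)
        have hu1 : u ≠ z₁ := by rintro rfl; exact hp (by simp)
        rw [hA3 u hu0 hu1]
        norm_num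
      · rw [hhbar j]
        norm_num
    rw [hsum, ← Finset.sum_subset hsub hvan,
      Finset.sum_pair (by simpa using Ne.symm hz₁ne)]
  have e1R : (d.e.repr α (Sum.inl z₀) : ℝ) * (φ (d.e (Sum.inl z₀)) : ℝ) = 1 := by
    have h1 := hbound1 z₀
    have h2 := hbound1 z₁
    nlinarith [hsum2]
  have e2R : (d.e.repr α (Sum.inl z₁) : ℝ) * (φ (d.e (Sum.inl z₁)) : ℝ) = 1 := by
    have h1 := hbound1 z₀
    nlinarith [hsum2]
  have e1 : d.e.repr α (Sum.inl z₀) * φ (d.e (Sum.inl z₀)) = 1 := by exact_mod_cast e1R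
  have e2 : d.e.repr α (Sum.inl z₁) * φ (d.e (Sum.inl z₁)) = 1 := by exact_mod_cast e2R
  -- the data
  set c : 𝕜 := -(φ (d.e (Sum.inl z₀)) * d.e.repr α (Sum.inl z₁)) with hcdef
  set c' : 𝕜 := -(φ (d.e (Sum.inl z₁)) * d.e.repr α (Sum.inl z₀)) with hc'def
  set h : V := r.ρ (cs.simple b) (d.e (Sum.inl z₀)) - c • d.e (Sum.inl z₁) with hhdef
  have hc_coord : d.e.repr (r.ρ (cs.simple b) (d.e (Sum.inl z₀))) (Sum.inl z₁) = c := by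
    rw [hrepr, d.e.repr_self, Finsupp.single_apply, if_neg (by simpa using hz₁ne.symm)]
    rw [hcdef]; ring
  have hc'_coord : d.e.repr (r.ρ (cs.simple b) (d.e (Sum.inl z₁))) (Sum.inl z₀) = c' := by
    rw [hrepr, d.e.repr_self, Finsupp.single_apply, if_neg (by simpa using hz₁ne)]
    rw [hc'def]; ring
  have hkpc : InKPlus k c := by
    constructor
    · rw [← hc_coord]; exact hkc z₀ (Sum.inl z₁)
    · rw [hcdef]; push_cast; nlinarith
  have hkpc' : InKPlus k c' := by
    constructor
    · rw [← hc'_coord]; exact hkc z₁ (Sum.inl z₀)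
    · rw [hc'def]; push_cast; nlinarith
  have hcc' : c * c' = 1 := by
    rw [hcdef, hc'def]
    linear_combination (d.e.repr α (Sum.inl z₁) * φ (d.e (Sum.inl z₁))) * e1 + e2
  have hhspan : d.InHSpan h := by
    constructor
    · intro i
      rw [hhdef, map_sub, map_smul, Finsupp.sub_apply, Finsupp.smul_apply, hrepr,
        d.e.repr_self, d.e.repr_self, Finsupp.single_apply, Finsupp.single_apply,
        smul_eq_mul]
      by_cases h0 : i = z₀
      · rw [h0, if_pos rfl, if_neg (by simpa using hz₁ne)]
        linear_combination -e1
      · by_cases h1 : i = z₁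
        · rw [h1, if_neg (by simpa using hz₁ne.symm), if_pos rfl, hcdef]
          ring
        · rw [if_neg (by simpa using Ne.symm h0), if_neg (by simpa using Ne.symm h1),
            hA3 i h0 h1]
          ring
    · intro j
      rw [hhdef, map_sub, map_smul, Finsupp.sub_apply, Finsupp.smul_apply,
        d.e.repr_self, Finsupp.single_apply, if_neg (by simp), smul_eq_mul, mul_zero, sub_zero]
      exact hkc z₀ (Sum.inr j)
  have hseq : r.ρ (cs.simple b) (d.X z₀) = c • d.X z₁ + h := by
    rw [hX, hX, hhdef]
    abel
  have hfix : ∀ z : ι, z ≠ z₀ → z ≠ z₁ → r.ρ (cs.simple b) (d.X z) = d.X z := by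
    intro z hz0 hz1
    rw [hX, hs, hA4 z hz0 hz1, zero_smul, sub_zero]
  -- preliminary facts for uniqueness
  have hone : (1 : 𝕜) ≠ 0 := by
    intro hcon
    have h5 : ((1 : 𝕜) : ℝ) = 0 := by rw [hcon]; norm_num
    norm_num at h5
  have hmoved0 : r.ρ (cs.simple b) (d.X z₀) ≠ d.X z₀ := by
    rw [hX]
    intro hcon
    have h5 := congrArg (fun v => d.e.repr v (Sum.inl z₀)) hcon
    simp only [hrepr] at h5
    have h2 : φ (d.e (Sum.inl z₀)) * d.e.repr α (Sum.inl z₀) = 0 := sub_eq_self.mp h5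
    rw [mul_comm] at h2
    rw [h2] at e1
    exact hone e1.symm
  have hmoved1 : r.ρ (cs.simple b) (d.X z₁) ≠ d.X z₁ := by
    rw [hX]
    intro hcon
    have h5 := congrArg (fun v => d.e.repr v (Sum.inl z₁)) hcon
    simp only [hrepr] at h5
    have h2 : φ (d.e (Sum.inl z₁)) * d.e.repr α (Sum.inl z₁) = 0 := sub_eq_self.mp h5
    rw [mul_comm] at h2
    rw [h2] at e2
    exact hone e2.symm
  refine ⟨z₀, z₁, c, h, fun hcon => hz₁ne hcon.symm, hkpc, ⟨c', hkpc', hcc'⟩, hhspan, hseq, hfix, ?_⟩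
  -- uniqueness
  intro i₂ j₂ c₂ h₂ hne₂ _ hH₂ heq₂ hfix₂
  have hi₂ : z₀ = i₂ ∨ z₁ = i₂ := by
    by_contra hcon
    push_neg at hcon
    have hfixi := hfix i₂ (fun hc => hcon.1 hc.symm) (fun hc => hcon.2 hc.symm)
    rw [hfixi] at heq₂
    have h5 := congrArg (fun v => d.e.repr v (Sum.inl i₂)) heq₂
    simp only [map_add, map_smul, Finsupp.add_apply, Finsupp.smul_apply, hX,
      d.e.repr_self, Finsupp.single_apply, smul_eq_mul] at h5
    rw [if_pos trivial, if_neg (by simpa using Ne.symm hne₂), hH₂.1 i₂, mul_zero, add_zero] at h5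
    exact hone h5
  have hz0m : z₀ = i₂ ∨ z₀ = j₂ := by
    by_contra hcon
    push_neg at hcon
    exact hmoved0 (hfix₂ z₀ hcon.1 hcon.2)
  have hz1m : z₁ = i₂ ∨ z₁ = j₂ := by
    by_contra hcon
    push_neg at hcon
    exact hmoved1 (hfix₂ z₁ hcon.1 hcon.2)
  rcases hi₂ with rfl | rfl
  · -- i₂ = z₀, so j₂ = z₁
    left
    obtain rfl : z₁ = j₂ := by
      rcases hz1m with h' | h'
      · exact absurd h' hz₁ne
      · exact h'
    have hc₂ : c₂ = c := by
      have h5 := congrArg (fun v => d.e.repr v (Sum.inl z₁)) heq₂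
      simp only [map_add, map_smul, Finsupp.add_apply, Finsupp.smul_apply, hX,
        d.e.repr_self, Finsupp.single_apply, smul_eq_mul] at h5
      rw [hc_coord, if_pos trivial, mul_one, hH₂.1 z₁, add_zero] at h5
      exact h5.symm
    refine ⟨rfl, rfl, hc₂, ?_⟩
    subst hc₂
    have h6 : c • d.X z₁ + h₂ = c • d.X z₁ + h := by
      rw [← heq₂, hseq]
    exact add_left_cancel h6
  · -- i₂ = z₁, so j₂ = z₀
    right
    obtain rfl : z₀ = j₂ := by
      rcases hz0m with h' | h'
      · exact absurd h'.symm hz₁ne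
      · exact h'
    have hc₂ : c₂ = c' := by
      have h5 := congrArg (fun v => d.e.repr v (Sum.inl z₀)) heq₂
      simp only [map_add, map_smul, Finsupp.add_apply, Finsupp.smul_apply, hX,
        d.e.repr_self, Finsupp.single_apply, smul_eq_mul] at h5
      rw [hc'_coord, if_pos trivial, mul_one, hH₂.1 z₀, add_zero] at h5
      exact h5.symm
    subst hc₂
    refine ⟨rfl, rfl, by rw [mul_comm]; exact hcc', ?_⟩
    -- h₂ = -(c' • h)
    have hh₂ : h₂ = r.ρ (cs.simple b) (d.e (Sum.inl z₁)) - c' • d.e (Sum.inl z₀) := by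
      rw [hX, hX] at heq₂
      rw [heq₂]
      abel
    rw [hh₂, hhdef, hs, hs]
    have hct : c' * φ (d.e (Sum.inl z₀)) = -(φ (d.e (Sum.inl z₁))) := by
      rw [hc'def]
      linear_combination (-(φ (d.e (Sum.inl z₁)))) * e1
    have hc'c : c' * c = 1 := by rw [mul_comm]; exact hcc'
    match_scalars
    · linear_combination -hc'c
    · linear_combination -hct
    · ring

end Aux

/-- **Theorem 1.** If a realization of a Coxeter system `(W, S)` over a commutative domain
`𝕜 ⊆ ℝ` preserves the almost-orthant for `k` spanned by `(X, H)`, then each simple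
reflection `s ∈ S` either acts trivially on `V`, or there exist `x ≠ y` in `X`,
`b ∈ k₊` invertible with inverse in `k₊`, and `ħ` in the `k`-span of `H` with
`s(x) = b • y + ħ` and `s(z) = z` for all `z ∈ X \ {x, y}`; moreover the quadruple
`(x, y, b, ħ)` is unique up to the symmetry `(x, y, b, ħ) ↔ (y, x, b⁻¹, -b⁻¹ • ħ)`. -/
theorem simple_reflection_is_rescaled_shifted_transposition
    {𝕜 k : Subring ℝ} {B W : Type*} [Group W] {M : CoxeterMatrix B}
    {cs : CoxeterSystem M W} {V : Type*} [AddCommGroup V] [Module 𝕜 V] [Module.Free 𝕜 V]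
    {r : Realization 𝕜 M cs V} {ι η : Type*}
    (d : OrthantSetup 𝕜 k r ι η) (b : B) :
    (∀ v : V, r.ρ (cs.simple b) v = v) ∨
    ∃ (i j : ι) (c : 𝕜) (h : V),
      i ≠ j ∧ InKPlus k c ∧ (∃ c' : 𝕜, InKPlus k c' ∧ c * c' = 1) ∧ d.InHSpan h ∧
      r.ρ (cs.simple b) (d.X i) = c • d.X j + h ∧
      (∀ z : ι, z ≠ i → z ≠ j → r.ρ (cs.simple b) (d.X z) = d.X z) ∧
      (∀ (i₂ j₂ : ι) (c₂ : 𝕜) (h₂ : V),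
        i₂ ≠ j₂ → InKPlus k c₂ → d.InHSpan h₂ →
        r.ρ (cs.simple b) (d.X i₂) = c₂ • d.X j₂ + h₂ →
        (∀ z : ι, z ≠ i₂ → z ≠ j₂ → r.ρ (cs.simple b) (d.X z) = d.X z) →
        ((i₂ = i ∧ j₂ = j ∧ c₂ = c ∧ h₂ = h) ∨
         (i₂ = j ∧ j₂ = i ∧ c₂ * c = 1 ∧ h₂ = -(c₂ • h))))  := by
  classical
  by_cases htriv : ∀ v : V, r.ρ (cs.simple b) v = v
  · exact Or.inl htriv
  right
  push_neg at htriv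
  obtain ⟨v₀, hv₀⟩ := htriv
  have hs : ∀ v, r.ρ (cs.simple b) v = v - r.coroot b v • r.root b := r.simple_act b
  have hαne : r.root b ≠ 0 := by
    intro h0
    apply hv₀
    rw [hs, h0, smul_zero, sub_zero]
  obtain ⟨p₀, hp₀⟩ : ∃ p, d.e.repr (r.root b) p ≠ 0 := by
    by_contra hc
    push_neg at hc
    apply hαne
    apply d.e.repr.injective
    ext p
    simpa using hc p
  have hsum := aux_sum d hs (r.coroot_root_self b) hp₀
  obtain ⟨p₁, hp₁S, hp₁⟩ : ∃ p ∈ (d.e.repr (r.root b)).support,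
      0 < ((d.e.repr (r.root b) p : ℝ) * (r.coroot b (d.e p) : ℝ)) := by
    by_contra hcon
    push_neg at hcon
    have := Finset.sum_nonpos hcon
    linarith
  obtain ⟨z₀, rfl⟩ : ∃ z, p₁ = Sum.inl z := by
    rcases p₁ with z | j
    · exact ⟨z, rfl⟩
    · rw [aux_hbar0 d hs hp₀ j] at hp₁
      norm_num at hp₁
  by_cases hsgn : 0 < ((r.coroot b (d.e (Sum.inl z₀)) : ℝ))
  · have ha0 : 0 < ((d.e.repr (r.root b) (Sum.inl z₀) : ℝ)) := by nlinarith
    exact aux_key d b (r.coroot b) (r.root b) hs (r.coroot_root_self b) z₀ hsgn ha0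
  · push_neg at hsgn
    have ht0 : ((r.coroot b (d.e (Sum.inl z₀)) : ℝ)) < 0 := by
      rcases lt_or_eq_of_le hsgn with h | h
      · exact h
      · rw [h] at hp₁; norm_num at hp₁
    have ha0 : ((d.e.repr (r.root b) (Sum.inl z₀) : ℝ)) < 0 := by nlinarith
    have hs' : ∀ v, r.ρ (cs.simple b) v = v - (-(r.coroot b)) v • (-(r.root b)) := by
      intro v
      rw [hs]
      simp
    have hφα' : (-(r.coroot b)) (-(r.root b)) = 2 := by
      simp [r.coroot_root_self b]
    have ht0' : 0 < (((-(r.coroot b)) (d.e (Sum.inl z₀)) : ℝ)) := by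
      simp only [LinearMap.neg_apply]
      push_cast
      linarith
    have ha0' : 0 < ((d.e.repr (-(r.root b)) (Sum.inl z₀) : ℝ)) := by
      rw [map_neg]
      simp only [Finsupp.neg_apply]
      push_cast
      linarith
    exact aux_key d b (-(r.coroot b)) (-(r.root b)) hs' hφα' z₀ ht0' ha0'
end
end

section
/- Let (W,S) be a Coxeter system with a realization V over a commutative domain 𝕜 ⊆ ℝ, and suppose W preserves the almost-orthant for k = ℤ spanned by (X,H). Then any simple reflection s ∈ S either acts trivially on V, or there exist x ≠ y in X and ħ in the ℤ-span of H such that s(x) = y + ħ, s(y) = x − ħ, and s(z) = z for every z ∈ X \ {x,y}; that is, s permutes X by a single transposition modulo the span of H. -/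
open Function

noncomputable section

variable {𝕜 : Subring ℝ}

/-!
Write `s(v) = v - ⟨α^∨, v⟩ α`. Since `s` fixes every `ħ ∈ H` and `α ≠ 0`, `α^∨` vanishes on
`H`, so with `C z = ⟨α^∨, x_z⟩` and `Q z` the `x_z`-coordinate of `α` we get
`∑ C z Q z = ⟨α^∨, α⟩ = 2`.
Preservation of the almost-orthant makes every entry of `1 - C Qᵀ` a natural number. The
off-diagonal entries being `≤ 0`, any two diagonal entries `C z Q z` have a nonnegative product;
as one of them is positive, all lie in `{0, 1}`, and exactly two, at `x` and `y`, equal `1`. Then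
`C x Q y = C y Q x = -1`, and the sign constraints force `C` and `Q` to be supported on `{x, y}`
with `C y = -C x`, `Q y = -Q x`: so `s` swaps `x` and `y` up to `ħ = s(x) - y ∈ span H`.
-/

section ReflectionMatrix

open Finset

variable {R ι : Type*}

theorem Finset.exists_ne_of_sum_eq_two [AddCommMonoidWithOne R] [CharZero R] {s : Finset ι}
    {t : ι → R} (h01 : ∀ z ∈ s, t z = 0 ∨ t z = 1) (hsum : ∑ z ∈ s, t z = 2) :
    ∃ i j, i ≠ j ∧ t i = 1 ∧ t j = 1 := by
  classical
  have hcard : #{z ∈ s | t z = 1} = 2 := by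
    rw [← Nat.cast_inj (R := R), ← Finset.sum_boole, Nat.cast_ofNat, ← hsum]
    refine Finset.sum_congr rfl fun z hz => ?_
    rcases h01 z hz with h | h <;> simp [h]
  obtain ⟨i, hi, j, hj, hij⟩ := Finset.one_lt_card.mp (by omega : 1 < #{z ∈ s | t z = 1})
  exact ⟨i, j, hij, (Finset.mem_filter.mp hi).2, (Finset.mem_filter.mp hj).2⟩

variable [CommRing R] [LinearOrder R] [IsStrictOrderedRing R] [DecidableEq ι]

/-- The matrix `1 - C Qᵀ` has entries in `ℕ`. For a simple reflection `s(v) = v - ⟨α^∨, v⟩ α`,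
with `C z = ⟨α^∨, x_z⟩` and `Q` the `X`-coordinates of `α`, row `z` is the `X`-part of `s(x_z)`. -/
def HasNatReflectionEntries (C Q : ι → R) : Prop :=
  ∀ z w, ∃ n : ℕ, (n : R) = (if z = w then 1 else 0) - C z * Q w

namespace HasNatReflectionEntries

variable {C Q : ι → R}

theorem mul_nonpos (hCQ : HasNatReflectionEntries C Q) {z w : ι} (h : z ≠ w) :
    C z * Q w ≤ 0 := by
  obtain ⟨n, hn⟩ := hCQ z w
  rw [if_neg h] at hn
  linarith [n.cast_nonneg (α := R)]

theorem diag_eq_zero_or_one (hCQ : HasNatReflectionEntries C Q) {s : Finset ι}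
    (hsum : ∑ z ∈ s, C z * Q z = 2) (z : ι) : C z * Q z = 0 ∨ C z * Q z = 1 := by
  -- `(C z Q z) (C w Q w) = (C z Q w) (C w Q z)` is a product of two nonpositive numbers
  have hdiag_mul_nonneg : ∀ w, z ≠ w → 0 ≤ (C z * Q z) * (C w * Q w) := fun w h => by
    have := mul_nonneg_of_nonpos_of_nonpos (hCQ.mul_nonpos h) (hCQ.mul_nonpos h.symm)
    linarith
  obtain ⟨i₀, -, hi₀⟩ : ∃ i₀ ∈ s, 0 < C i₀ * Q i₀ :=
    Finset.exists_lt_of_sum_lt (by simp [hsum] : ∑ z ∈ s, (0 : R) < ∑ z ∈ s, C z * Q z)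
  have hnonneg : 0 ≤ C z * Q z := by
    rcases eq_or_ne z i₀ with rfl | h
    · exact hi₀.le
    · exact nonneg_of_mul_nonneg_left (hdiag_mul_nonneg i₀ h) hi₀
  obtain ⟨n, hn⟩ := hCQ z z
  rw [if_pos rfl] at hn
  have hn1 : n ≤ 1 := by exact_mod_cast (by linarith : (n : R) ≤ 1)
  interval_cases n
  · right; push_cast at hn; linarith
  · left; push_cast at hn; linarith

theorem off_diag_eq_neg_one (hCQ : HasNatReflectionEntries C Q) {i j : ι} (hij : i ≠ j)
    (hi : C i * Q i = 1) (hj : C j * Q j = 1) : C i * Q j = -1 := by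
  obtain ⟨m, hm⟩ := hCQ i j
  obtain ⟨n, hn⟩ := hCQ j i
  rw [if_neg hij] at hm
  rw [if_neg hij.symm] at hn
  -- `m` and `n` are natural numbers with `m * n = (C i Q i) (C j Q j) = 1`
  have hmn : m * n = 1 := by
    have : ((m * n : ℕ) : R) = 1 := by
      push_cast
      rw [hm, hn]
      linear_combination (C j * Q j) * hi + hj
    exact_mod_cast this
  obtain ⟨rfl, -⟩ := mul_eq_one.mp hmn
  push_cast at hm
  linarith

theorem exists_pair (hCQ : HasNatReflectionEntries C Q) {s : Finset ι}
    (hsum : ∑ z ∈ s, C z * Q z = 2) :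
    ∃ i j, i ≠ j ∧ C i * Q i = 1 ∧ C j = -C i ∧ Q j = -Q i ∧
      ∀ z, z ≠ i → z ≠ j → C z = 0 ∧ Q z = 0 := by
  obtain ⟨i, j, hij, hi, hj⟩ :=
    Finset.exists_ne_of_sum_eq_two (fun z _ => hCQ.diag_eq_zero_or_one hsum z) hsum
  have hCi : C i ≠ 0 := left_ne_zero_of_mul_eq_one hi
  have hQi : Q i ≠ 0 := right_ne_zero_of_mul_eq_one hi
  have hCj : C j = -C i := by
    have : (C j + C i) * Q i = 0 := by
      linear_combination hCQ.off_diag_eq_neg_one hij.symm hj hi + hi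
    linear_combination (mul_eq_zero.mp this).resolve_right hQi
  have hQj : Q j = -Q i := by
    have : C i * (Q j + Q i) = 0 := by
      linear_combination hCQ.off_diag_eq_neg_one hij hi hj + hi
    linear_combination (mul_eq_zero.mp this).resolve_left hCi
  refine ⟨i, j, hij, hi, hCj, hQj, fun z hzi hzj => ⟨?_, ?_⟩⟩
  · have h₁ := hCQ.mul_nonpos hzi
    have h₂ := hCQ.mul_nonpos hzj
    rw [hQj] at h₂
    exact (mul_eq_zero.mp (by linarith : C z * Q i = 0)).resolve_right hQi
  · have h₁ := hCQ.mul_nonpos (Ne.symm hzi)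
    have h₂ := hCQ.mul_nonpos (Ne.symm hzj)
    rw [hCj] at h₂
    exact (mul_eq_zero.mp (by linarith : C i * Q z = 0)).resolve_left hCi

end HasNatReflectionEntries

end ReflectionMatrix

theorem exists_natCast_of_mem_intSubring {x : 𝕜} (hx : (x : ℝ) ∈ intSubring)
    (h0 : 0 ≤ (x : ℝ)) : ∃ n : ℕ, (n : 𝕜) = x := by
  obtain ⟨n, hn⟩ := hx
  lift n to ℕ using by simpa [← hn] using h0
  exact ⟨n, Subtype.ext (by simpa using hn)⟩

namespace Realization

variable {B W : Type*} [Group W] {M : CoxeterMatrix B} {cs : CoxeterSystem M W}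
  {V : Type*} [AddCommGroup V] [Module 𝕜 V] (r : Realization 𝕜 M cs V) (b : B)

theorem root_ne_zero : r.root b ≠ 0 := fun h => by
  simpa [h] using r.coroot_root_self b

theorem coroot_eq_zero_of_simple_apply_eq [Module.IsTorsionFree 𝕜 V] {v : V}
    (hv : r.ρ (cs.simple b) v = v) : r.coroot b v = 0 := by
  rw [r.simple_act, sub_eq_self] at hv
  exact (smul_eq_zero.mp hv).resolve_right (r.root_ne_zero b)

end Realization

namespace OrthantSetup

variable {k : Subring ℝ} {B W : Type*} [Group W] {M : CoxeterMatrix B}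
  {cs : CoxeterSystem M W} {V : Type*} [AddCommGroup V] [Module 𝕜 V]
  {r : Realization 𝕜 M cs V} {ι η : Type*}

theorem X_mem_almostOrthant (d : OrthantSetup 𝕜 k r ι η) (z : ι) :
    d.X z ∈ almostOrthant k d.e := by
  classical
  refine ⟨fun p => ?_, fun w => ?_⟩
  · by_cases h : Sum.inl z = p <;> simp [X, h, one_mem, zero_mem]
  · by_cases h : z = w <;> simp [X, h]

theorem repr_X_inl [DecidableEq ι] (d : OrthantSetup 𝕜 k r ι η) (z w : ι) :
    d.e.repr (d.X z) (Sum.inl w) = if z = w then 1 else 0 := by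
  by_cases h : z = w <;> simp [X, h]

theorem repr_simple_X_inl [DecidableEq ι] (d : OrthantSetup 𝕜 k r ι η) (b : B) (z w : ι) :
    d.e.repr (r.ρ (cs.simple b) (d.X z)) (Sum.inl w) =
      (if z = w then 1 else 0) - r.coroot b (d.X z) * d.e.repr (r.root b) (Sum.inl w) := by
  simp [r.simple_act, repr_X_inl]

theorem coroot_hbar [Module.IsTorsionFree 𝕜 V] (d : OrthantSetup 𝕜 k r ι η) (b : B) (j : η) :
    r.coroot b (d.hbar j) = 0 :=
  r.coroot_eq_zero_of_simple_apply_eq b (d.invariant j _)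

theorem sum_coroot_X_mul_repr_root [Module.IsTorsionFree 𝕜 V] (d : OrthantSetup 𝕜 k r ι η)
    (b : B) :
    ∑ z ∈ (d.e.repr (r.root b)).support.toLeft,
      r.coroot b (d.X z) * d.e.repr (r.root b) (Sum.inl z) = 2 := by
  have h := congrArg (r.coroot b) (d.e.linearCombination_repr (r.root b))
  rw [r.coroot_root_self, Finsupp.linearCombination_apply, Finsupp.sum, map_sum,
    Finset.sum_sum_eq_sum_toLeft_add_sum_toRight] at h
  have hH : ∀ j, r.coroot b (d.e (Sum.inr j)) = 0 := d.coroot_hbar b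
  simpa [X, hH, mul_comm] using h

theorem hasNatReflectionEntries [DecidableEq ι] (d : OrthantSetup 𝕜 intSubring r ι η)
    (b : B) :
    HasNatReflectionEntries (fun z => r.coroot b (d.X z))
      (fun z => d.e.repr (r.root b) (Sum.inl z)) := fun z w => by
  have h := d.orthant_stable (cs.simple b) _ (d.X_mem_almostOrthant z)
  rw [← d.repr_simple_X_inl]
  exact exists_natCast_of_mem_intSubring (h.1 _) (h.2 w)

end OrthantSetup

/-- If a realization of a Coxeter system `(W, S)` over a commutative domain `𝕜 ⊆ ℝ`
preserves the almost-orthant for `k = ℤ` spanned by `(X, H)`, then each simple reflection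
`s ∈ S` either acts trivially on `V`, or there exist `x ≠ y` in `X` and `ħ` in the
`ℤ`-span of `H` with `s(x) = y + ħ`, `s(y) = x - ħ`, and `s(z) = z` for all
`z ∈ X \ {x, y}`; that is, `s` permutes `X` by a single transposition modulo the span
of `H`. -/
theorem simple_reflection_is_transposition_mod_H
    {𝕜 : Subring ℝ} {B W : Type*} [Group W] {M : CoxeterMatrix B}
    {cs : CoxeterSystem M W} {V : Type*} [AddCommGroup V] [Module 𝕜 V] [Module.Free 𝕜 V]
    {r : Realization 𝕜 M cs V} {ι η : Type*}
    (d : OrthantSetup 𝕜 intSubring r ι η) (b : B) :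
    (∀ v : V, r.ρ (cs.simple b) v = v) ∨
    ∃ (i j : ι) (h : V),
      i ≠ j ∧ d.InHSpan h ∧
      r.ρ (cs.simple b) (d.X i) = d.X j + h ∧
      r.ρ (cs.simple b) (d.X j) = d.X i - h ∧
      (∀ z : ι, z ≠ i → z ≠ j → r.ρ (cs.simple b) (d.X z) = d.X z) := by
  classical
  right
  obtain ⟨i, j, hij, hi, hCj, hQj, hrest⟩ := 
    (d.hasNatReflectionEntries b).exists_pair (d.sum_coroot_X_mul_repr_root b)
  refine ⟨i, j, r.ρ (cs.simple b) (d.X i) - d.X j, hij, ⟨fun z => ?_, fun p => ?_⟩, by abel,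
    ?_, fun z hzi hzj => ?_⟩
  · rw [map_sub, Finsupp.sub_apply, d.repr_simple_X_inl, d.repr_X_inl]
    rcases eq_or_ne z i with rfl | hzi
    · simp [hi, hij.symm]
    rcases eq_or_ne z j with rfl | hzj
    · simp [hQj, hi, hzi.symm]
    · simp [(hrest z hzi hzj).2, hzi.symm, hzj.symm]
  · simpa [OrthantSetup.X] using (d.orthant_stable _ _ (d.X_mem_almostOrthant i)).1 (Sum.inr p)
  · rw [r.simple_act, r.simple_act, hCj, neg_smul]
    abel
  · rw [r.simple_act, (hrest z hzi hzj).1, zero_smul, sub_zero]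
end
end

section
/- Let (W,S) be a Coxeter system with a realization V over a commutative domain 𝕜 ⊆ ℝ. Suppose W preserves a ℤ-lattice Λ ⊆ V and preserves an orthant inside Λ (i.e. the ℤ_{≥0}-span of some ℤ-basis of Λ). Then W permutes a ℤ-basis of Λ, and each simple reflection in S acts on this basis either trivially or as a transposition of two basis elements. -/
/-!
On the orthant, every nonzero vector has nonnegative integer coordinates, so its coordinate sum
is at least `1`. A basis vector has coordinate sum `1`, hence is not the sum of two nonzero
orthant vectors. A linear automorphism `g` preserving the orthant together with its inverse
therefore sends basis vectors to basis vectors: some coordinate of `g xᵢ` is at least `1`, say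
the `j`-th, so `g xᵢ = xⱼ + u` with `u` in the orthant, and `xᵢ = g⁻¹ xⱼ + g⁻¹ u` forces `u = 0`.

A simple reflection moves each basis vector `x` by the multiple `⟨αₛ^∨, x⟩ αₛ` of the root, so
for two moved basis vectors `x`, `y` the differences `x - s x` and `y - s y` are proportional.
Comparing coordinates shows that at most two basis vectors are moved, so `s` acts trivially or
as a transposition.
-/

open Function

noncomputable section

variable {𝕜 : Subring ℝ}

lemma one_le_of_mem_intSubring {x : ℝ} (hx : x ∈ intSubring) (h0 : 0 ≤ x) (hne : x ≠ 0) :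
    1 ≤ x := by
  obtain ⟨n, rfl⟩ := RingHom.mem_range.mp hx
  simp only [Int.coe_castRingHom] at h0 hne ⊢
  have hn0 : 0 ≤ n := by exact_mod_cast h0
  have hn : n ≠ 0 := by exact_mod_cast hne
  exact_mod_cast (by omega : (1 : ℤ) ≤ n)

section almostOrthant

variable {𝕜 k : Subring ℝ} {V ι η : Type*} [AddCommGroup V] [Module 𝕜 V]

lemma basis_mem_almostOrthant (e : Module.Basis (ι ⊕ η) 𝕜 V) (p : ι ⊕ η) :
    e p ∈ almostOrthant k e := by
  classical
  refine ⟨fun q => ?_, fun i => ?_⟩ <;>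
    rw [Module.Basis.repr_self, Finsupp.single_apply] <;> split_ifs <;> simp

lemma sub_basis_mem_almostOrthant {e : Module.Basis (ι ⊕ η) 𝕜 V} {v : V}
    (hv : v ∈ almostOrthant k e) {p : ι ⊕ η} (hp : 1 ≤ (e.repr v p : ℝ)) :
    v - e p ∈ almostOrthant k e := by
  classical
  refine ⟨fun q => ?_, fun i => ?_⟩ <;>
    simp only [map_sub, Module.Basis.repr_self, Finsupp.sub_apply, Finsupp.single_apply] <;>
    split_ifs with h
  · simpa using k.sub_mem (hv.1 q) k.one_mem
  · simpa using hv.1 q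
  · subst h; simpa using hp
  · simpa using hv.2 i

end almostOrthant

section intOrthant

variable {𝕜 : Subring ℝ} {V ι : Type*} [AddCommGroup V] [Module 𝕜 V]
  {e : Module.Basis (ι ⊕ Empty) 𝕜 V} {v : V}

lemma repr_nonneg_of_mem_almostOrthant {k : Subring ℝ} (hv : v ∈ almostOrthant k e)
    (p : ι ⊕ Empty) : 0 ≤ (e.repr v p : ℝ) := by
  rcases p with i | j
  exacts [hv.2 i, j.elim]

lemma exists_one_le_repr_of_mem_almostOrthant (hv : v ∈ almostOrthant intSubring e)
    (h0 : v ≠ 0) : ∃ p, 1 ≤ (e.repr v p : ℝ) := by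
  obtain ⟨p, hp⟩ : ∃ p, e.repr v p ≠ 0 := by
    by_contra! h
    exact h0 (e.repr.map_eq_zero_iff.mp (Finsupp.ext h))
  exact ⟨p, one_le_of_mem_intSubring (hv.1 p) (repr_nonneg_of_mem_almostOrthant hv p)
    (fun h => hp (Subtype.ext h))⟩

lemma one_le_sumCoords_of_mem_almostOrthant (hv : v ∈ almostOrthant intSubring e)
    (h0 : v ≠ 0) : 1 ≤ (e.sumCoords v : ℝ) := by
  obtain ⟨p, hp⟩ := exists_one_le_repr_of_mem_almostOrthant hv h0
  have hp_mem : p ∈ (e.repr v).support :=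
    Finsupp.mem_support_iff.mpr fun h => by simp [h] at hp; linarith
  rw [Module.Basis.coe_sumCoords]
  dsimp only
  rw [Finsupp.sum, AddSubmonoidClass.coe_finsetSum]
  exact hp.trans (Finset.single_le_sum (fun q _ => repr_nonneg_of_mem_almostOrthant hv q) hp_mem)

lemma eq_zero_of_basis_eq_add {p : ι ⊕ Empty} {a b : V} (hab : e p = a + b)
    (ha : a ∈ almostOrthant intSubring e) (hb : b ∈ almostOrthant intSubring e) (ha0 : a ≠ 0) :
    b = 0 := by
  by_contra hb0
  have hsum : (e.sumCoords (e p) : ℝ) = e.sumCoords a + e.sumCoords b := by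
    rw [hab, map_add, Subring.coe_add]
  rw [Module.Basis.sumCoords_self_apply, Subring.coe_one] at hsum
  linarith [one_le_sumCoords_of_mem_almostOrthant ha ha0,
    one_le_sumCoords_of_mem_almostOrthant hb hb0]

lemma exists_apply_basis_eq_basis (g : V ≃ₗ[𝕜] V)
    (hg : ∀ v ∈ almostOrthant intSubring e, g v ∈ almostOrthant intSubring e)
    (hg_symm : ∀ v ∈ almostOrthant intSubring e, g.symm v ∈ almostOrthant intSubring e)
    (p : ι ⊕ Empty) : ∃ q, g (e p) = e q := by
  have hgp := hg _ (basis_mem_almostOrthant e p)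
  obtain ⟨q, hq⟩ := exists_one_le_repr_of_mem_almostOrthant hgp
    (g.map_ne_zero_iff.mpr (e.ne_zero p))
  have hdecomp : e p = g.symm (e q) + g.symm (g (e p) - e q) := by
    rw [← map_add, add_sub_cancel, LinearEquiv.symm_apply_apply]
  have hrest := eq_zero_of_basis_eq_add hdecomp (hg_symm _ (basis_mem_almostOrthant e q))
    (hg_symm _ (sub_basis_mem_almostOrthant hgp hq)) (g.symm.map_ne_zero_iff.mpr (e.ne_zero q))
  exact ⟨q, sub_eq_zero.mp (g.symm.map_eq_zero_iff.mp hrest)⟩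

end intOrthant

lemma OrthantSetup.exists_rho_X_eq {𝕜 : Subring ℝ} {B W : Type*} [Group W]
    {M : CoxeterMatrix B} {cs : CoxeterSystem M W} {V : Type*} [AddCommGroup V] [Module 𝕜 V]
    {r : Realization 𝕜 M cs V} {ι : Type*} (d : OrthantSetup 𝕜 intSubring r ι Empty)
    (w : W) (i : ι) : ∃ j, r.ρ w (d.X i) = d.X j := by
  have hsymm : ∀ v, (r.ρ w).symm v = r.ρ w⁻¹ v := fun v => by rw [map_inv]; rfl
  obtain ⟨q | q, hq⟩ := exists_apply_basis_eq_basis (r.ρ w) (d.orthant_stable w)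
    (fun v hv => hsymm v ▸ d.orthant_stable w⁻¹ v hv) (Sum.inl i)
  exacts [⟨q, hq⟩, q.elim]

lemma MulAction.exists_hom_perm_of_smul_eq {G α ι : Type*} [Group G] [MulAction G α]
    {X : ι → α} (hX : Function.Injective X) (h : ∀ (g : G) i, ∃ j, g • X i = X j) :
    ∃ φ : G →* Equiv.Perm ι, ∀ g i, g • X i = X (φ g i) := by
  choose σ hσ using h
  let σHom : G →* Function.End ι :=
    { toFun := σ
      map_one' := funext fun i => hX <| by rw [← hσ, one_smul]; rfl
      map_mul' := fun g g' => funext fun i => hX <| by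
        rw [← hσ, mul_smul, hσ, hσ]; rfl }
  exact ⟨σHom.toHomPerm, hσ⟩

lemma Module.Basis.eq_or_eq_of_sub_smul_eq {R V κ : Type*} [CommRing R] [Nontrivial R]
    [AddCommGroup V] [Module R V] (e : Module.Basis κ R V) (f : V →ₗ[R] R) (a : V) {i j z l : κ}
    (hi : e i - f (e i) • a = e j) (hz : e z - f (e z) • a = e l) (hij : j ≠ i) (hzl : l ≠ z) :
    z = i ∨ z = j := by
  classical
  by_contra! hne
  have hprop : f (e z) • (e i - e j) = f (e i) • (e z - e l) := by
    rw [← hi, ← hz, sub_sub_cancel, sub_sub_cancel, smul_smul, smul_smul, mul_comm]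
  have hcoord := congrArg (fun v => e.repr v z) hprop
  simp only [map_sub, map_smul, Finsupp.smul_apply, Finsupp.sub_apply, smul_eq_mul,
    Module.Basis.repr_self, Finsupp.single_apply, hne.1.symm, hne.2.symm, hzl,
    if_true, if_false, sub_zero, mul_one, mul_zero] at hcoord
  exact hij (e.injective (by rw [← hi, ← hcoord, zero_smul, sub_zero]))

lemma Equiv.Perm.eq_one_or_exists_eq_swap {ι : Type*} [DecidableEq ι] {π : Equiv.Perm ι}
    (h : ∀ i z, π i ≠ i → π z ≠ z → z = i ∨ z = π i) :
    π = 1 ∨ ∃ i j, i ≠ j ∧ π = Equiv.swap i j := by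
  by_cases hπ : π = 1
  · exact Or.inl hπ
  obtain ⟨i, hi⟩ : ∃ i, π i ≠ i := by
    by_contra! hfix
    exact hπ (Equiv.ext hfix)
  have hπi : π (π i) ≠ π i := fun h' => hi (π.injective h')
  have hππi : π (π i) = i :=
    (h i _ hi (fun h' => hπi (π.injective h'))).resolve_right hπi
  refine Or.inr ⟨i, π i, hi.symm, Equiv.ext fun z => ?_⟩
  by_cases hz : π z = z
  · have hzi : z ≠ i := fun h' => hi (h' ▸ hz)
    have hzπi : z ≠ π i := fun h' => hπi (h' ▸ hz)
    rw [Equiv.swap_apply_of_ne_of_ne hzi hzπi, hz]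
  · rcases h i z hi hz with rfl | rfl
    · rw [Equiv.swap_apply_left]
    · rw [Equiv.swap_apply_right, hππi]

theorem coxeter_preserving_orthant_permutes_basis_general
    {𝕜 : Subring ℝ} {B W : Type*} [Group W] {M : CoxeterMatrix B}
    {cs : CoxeterSystem M W} {V : Type*} [AddCommGroup V] [Module 𝕜 V]
    {r : Realization 𝕜 M cs V} {ι : Type*} [DecidableEq ι]
    (d : OrthantSetup 𝕜 intSubring r ι Empty) :
    ∃ φ : W →* Equiv.Perm ι,
      (∀ (w : W) (i : ι), r.ρ w (d.X i) = d.X (φ w i)) ∧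
      (∀ b : B, φ (cs.simple b) = 1 ∨
        ∃ i j : ι, i ≠ j ∧ φ (cs.simple b) = Equiv.swap i j) := by
  let _ : MulAction W V := MulAction.compHom V r.ρ
  have hX : Function.Injective d.X := fun _ _ h => Sum.inl_injective (d.e.injective h)
  obtain ⟨φ, hφ⟩ := MulAction.exists_hom_perm_of_smul_eq hX d.exists_rho_X_eq
  refine ⟨φ, hφ, fun b => Equiv.Perm.eq_one_or_exists_eq_swap fun i z hi hz => ?_⟩
  have hmove : ∀ i, d.e (.inl i) - r.coroot b (d.e (.inl i)) • r.root b =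
      d.e (.inl (φ (cs.simple b) i)) :=
    fun i => (r.simple_act b _).symm.trans (hφ (cs.simple b) i)
  simpa using d.e.eq_or_eq_of_sub_smul_eq (r.coroot b) (r.root b) (hmove i) (hmove z)
    (by simpa using hi) (by simpa using hz)

/-- If a realization of a Coxeter system `(W, S)` over a commutative domain `𝕜 ⊆ ℝ`
preserves a `ℤ`-lattice `Λ ⊆ V` and an orthant inside it (here encoded via an
`OrthantSetup` with an empty set `H`, so that the almost-orthant is the
`ℤ_{≥0}`-span of the basis `X` of `Λ`), then `W` permutes the `ℤ`-basis `X` of `Λ`,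
and each simple reflection acts on this basis either trivially or as a transposition
of two basis elements. -/
theorem coxeter_preserving_orthant_permutes_basis
    {𝕜 : Subring ℝ} {B W : Type*} [Group W] {M : CoxeterMatrix B}
    {cs : CoxeterSystem M W} {V : Type*} [AddCommGroup V] [Module 𝕜 V] [Module.Free 𝕜 V]
    {r : Realization 𝕜 M cs V} {ι : Type*} [DecidableEq ι]
    (d : OrthantSetup 𝕜 intSubring r ι Empty) :
    ∃ φ : W →* Equiv.Perm ι,
      (∀ (w : W) (i : ι), r.ρ w (d.X i) = d.X (φ w i)) ∧
      (∀ b : B, φ (cs.simple b) = 1 ∨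
        ∃ i j : ι, i ≠ j ∧ φ (cs.simple b) = Equiv.swap i j) :=
  coxeter_preserving_orthant_permutes_basis_general d
end
end

section
/- Let (W,S) be a Coxeter system with a realization V over a commutative domain 𝕜 ⊆ ℝ, and suppose W preserves the almost-orthant for k spanned by (X,H). Let s, t ∈ S be simple reflections with X_s = X_t. Then either the element st acts trivially on V, or the action of st on V has infinite order. Moreover, if k = ℤ and H = ∅, then st acts trivially on V. -/
open Function

noncomputable section

variable {𝕜 : Subring ℝ}

section Aux

set_option synthInstance.maxHeartbeats 1000000
set_option maxHeartbeats 1000000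

variable {𝕜 k : Subring ℝ} {B W : Type*} [Group W] {M : CoxeterMatrix B}
  {cs : CoxeterSystem M W} {V : Type*} [AddCommGroup V] [Module 𝕜 V]
  {r : Realization 𝕜 M cs V} {ι η : Type*}

lemma basis_mem_orthant (d : OrthantSetup 𝕜 k r ι η) (p : ι ⊕ η) :
    d.e p ∈ almostOrthant k d.e := by
  classical
  constructor
  · intro q
    rw [Module.Basis.repr_self, Finsupp.single_apply]
    split
    · simpa using k.one_mem
    · simpa using k.zero_mem
  · intro i
    rw [Module.Basis.repr_self, Finsupp.single_apply]
    split
    · norm_num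
    · norm_num

lemma fix_of_inl_zero (d : OrthantSetup 𝕜 k r ι η) (v : V)
    (hv : ∀ z : ι, d.e.repr v (Sum.inl z) = 0) (w : W) : r.ρ w v = v := by
  conv_lhs => rw [← d.e.linearCombination_repr v]
  conv_rhs => rw [← d.e.linearCombination_repr v]
  rw [Finsupp.linearCombination_apply, map_finsuppSum]
  refine Finsupp.sum_congr ?_
  intro p hp
  rw [map_smul]
  congr 1
  cases p with
  | inl z => exact absurd (hv z) (Finsupp.mem_support_iff.mp hp)
  | inr jj => exact d.invariant jj w

lemma two_ne_zero𝕜 : (2 : 𝕜) ≠ 0 := by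
  intro hcon
  have : ((2 : 𝕜) : ℝ) = ((0 : 𝕜) : ℝ) := by rw [hcon]
  norm_num at this

lemma coroot_zero_of_inl_zero (d : OrthantSetup 𝕜 k r ι η) (b : B) (v : V)
    (hv : ∀ z : ι, d.e.repr v (Sum.inl z) = 0) : r.coroot b v = 0 := by
  have h1 := r.simple_act b v
  rw [fix_of_inl_zero d v hv] at h1
  have h2 : r.coroot b v • r.root b = 0 := by
    have := sub_eq_self.mp h1.symm
    exact this
  have h3 := congrArg (r.coroot b) h2
  rw [map_smul, smul_eq_mul, r.coroot_root_self, map_zero] at h3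
  rcases mul_eq_zero.mp h3 with h | h
  · exact h
  · exact absurd h two_ne_zero𝕜

lemma root_ne_smul_zero (d : OrthantSetup 𝕜 k r ι η) (b : B) {x : 𝕜} (hx : x ≠ 0) :
    x • r.root b ≠ 0 := by
  intro hcon
  have := congrArg (r.coroot b) hcon
  rw [map_smul, smul_eq_mul, r.coroot_root_self, map_zero] at this
  rcases mul_eq_zero.mp this with h | h
  · exact hx h
  · exact two_ne_zero𝕜 h

end Aux

section Aux2

set_option synthInstance.maxHeartbeats 1000000
set_option maxHeartbeats 1000000

variable {𝕜 k : Subring ℝ} {B W : Type*} [Group W] {M : CoxeterMatrix B}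
  {cs : CoxeterSystem M W} {V : Type*} [AddCommGroup V] [Module 𝕜 V]
  {r : Realization 𝕜 M cs V} {ι η : Type*}

lemma exists_two_pos {σ : Type*} (F : Finset σ) (f : σ → ℝ)
    (hsum : ∑ p ∈ F, f p = 2) (hle : ∀ p, f p ≤ 1) :
    ∃ i ∈ F, ∃ j ∈ F, i ≠ j ∧ 0 < f i ∧ 0 < f j := by
  classical
  have h1 : ∃ i ∈ F, 0 < f i := by
    by_contra h
    push_neg at h
    have : ∑ p ∈ F, f p ≤ 0 := Finset.sum_nonpos h
    linarith
  obtain ⟨i, hiF, hfi⟩ := h1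
  have hsplit : f i + ∑ p ∈ F.erase i, f p = 2 := by
    rw [Finset.add_sum_erase F f hiF]; exact hsum
  have h2 : ∃ j ∈ F.erase i, 0 < f j := by
    by_contra h
    push_neg at h
    have : ∑ p ∈ F.erase i, f p ≤ 0 := Finset.sum_nonpos h
    have := hle i
    linarith
  obtain ⟨j, hjF, hfj⟩ := h2
  exact ⟨i, hiF, j, Finset.mem_of_mem_erase hjF, (Finset.ne_of_mem_erase hjF).symm, hfi, hfj⟩

lemma sign_aux {ι' : Type*} (a c : ι' → ℝ)
    (h : ∀ y z, y ≠ z → c z * a y ≤ 0) {i j : ι'} (hij : i ≠ j)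
    (hi : 0 < c i * a i) (hj : 0 < c j * a j) (hci : 0 < c i) :
    ∀ z, z ≠ i → z ≠ j → a z = 0 ∧ c z = 0 := by
  have hai : 0 < a i := by nlinarith
  have haz : ∀ z, z ≠ i → a z ≤ 0 := by
    intro z hz
    have := h z i hz
    nlinarith
  have haj : a j < 0 := by
    rcases lt_or_eq_of_le (haz j hij.symm) with h' | h'
    · exact h'
    · exfalso; rw [h'] at hj; nlinarith
  have hcj : c j < 0 := by nlinarith
  intro z hzi hzj
  have ha1 : a z ≤ 0 := haz z hzi
  have ha2 : 0 ≤ a z := by have := h z j hzj; nlinarith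
  have haz0 : a z = 0 := le_antisymm ha1 ha2
  have hc1 : c z * a i ≤ 0 := h i z (fun h' => hzi h'.symm)
  have hc2 : c z * a j ≤ 0 := h j z (fun h' => hzj h'.symm)
  have hcz0 : c z = 0 := by nlinarith
  exact ⟨haz0, hcz0⟩

lemma sign_lemma {ι' : Type*} (a c : ι' → ℝ)
    (h : ∀ y z, y ≠ z → c z * a y ≤ 0) {i j : ι'} (hij : i ≠ j)
    (hi : 0 < c i * a i) (hj : 0 < c j * a j) :
    ∀ z, z ≠ i → z ≠ j → a z = 0 ∧ c z = 0 := by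
  rcases lt_trichotomy (c i) 0 with hc | hc | hc
  · have key := sign_aux (fun z => -a z) (fun z => -c z)
      (fun y z hyz => by simpa [neg_mul_neg] using h y z hyz) hij
      (by simpa [neg_mul_neg] using hi) (by simpa [neg_mul_neg] using hj)
      (by simpa using hc)
    intro z hzi hzj
    obtain ⟨h1, h2⟩ := key z hzi hzj
    exact ⟨by simpa using h1, by simpa using h2⟩
  · exfalso; rw [hc] at hi; simp at hi
  · exact sign_aux a c h hij hi hj hc

lemma reflection_structure (d : OrthantSetup 𝕜 k r ι η) (b : B) :
    ∃ i j : ι, i ≠ j ∧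
      r.coroot b (d.e (Sum.inl i)) * d.e.repr (r.root b) (Sum.inl i) = 1 ∧
      r.coroot b (d.e (Sum.inl j)) * d.e.repr (r.root b) (Sum.inl j) = 1 ∧
      (∀ z : ι, z ≠ i → z ≠ j →
        r.coroot b (d.e (Sum.inl z)) = 0 ∧ d.e.repr (r.root b) (Sum.inl z) = 0) ∧
      d.moved b = {i, j} := by
  classical
  have hC : ∀ (p : ι ⊕ η) (y : ι),
      ((r.coroot b (d.e p) : ℝ)) * ((d.e.repr (r.root b) (Sum.inl y) : ℝ)) ≤
        (if p = Sum.inl y then 1 else 0) := by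
    intro p y
    have hmem := (d.orthant_stable (cs.simple b) (d.e p) (basis_mem_orthant d p)).2 y
    have hrepr : d.e.repr (r.ρ (cs.simple b) (d.e p)) (Sum.inl y)
        = d.e.repr (d.e p) (Sum.inl y)
          - r.coroot b (d.e p) * d.e.repr (r.root b) (Sum.inl y) := by
      rw [r.simple_act, map_sub, map_smul, Finsupp.sub_apply, Finsupp.smul_apply, smul_eq_mul]
    rw [hrepr, Module.Basis.repr_self, Finsupp.single_apply] at hmem
    by_cases hpy : p = Sum.inl y
    · rw [if_pos hpy] at hmem
      rw [if_pos hpy]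
      push_cast at hmem
      linarith
    · rw [if_neg hpy] at hmem
      rw [if_neg hpy]
      push_cast at hmem
      linarith
  have hcr : ∀ jj : η, r.coroot b (d.e (Sum.inr jj)) = 0 := fun jj =>
    coroot_zero_of_inl_zero d b _
      (fun z => by rw [Module.Basis.repr_self, Finsupp.single_apply]; simp)
  set f : (ι ⊕ η) → ℝ :=
    fun p => ((d.e.repr (r.root b) p : ℝ)) * ((r.coroot b (d.e p) : ℝ)) with hf
  have hsum : ∑ p ∈ (d.e.repr (r.root b)).support, f p = 2 := by
    have e1 : r.coroot b (r.root b)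
        = ((d.e.repr (r.root b)).sum fun p x => x * r.coroot b (d.e p)) := by
      conv_lhs => rw [← d.e.linearCombination_repr (r.root b)]
      rw [Finsupp.linearCombination_apply, map_finsuppSum]
      simp [smul_eq_mul]
    have e2 : ((d.e.repr (r.root b)).sum fun p x => x * r.coroot b (d.e p)) = 2 := by
      rw [← e1, r.coroot_root_self]
    have e3 := congrArg (fun x : 𝕜 => (x : ℝ)) e2
    rw [Finsupp.sum] at e3
    push_cast at e3
    exact e3
  have hle : ∀ p, f p ≤ 1 := by
    intro p
    cases p with
    | inl y =>
      have := hC (Sum.inl y) y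
      rw [if_pos rfl] at this
      rw [hf]
      dsimp only
      linarith [this, mul_comm ((d.e.repr (r.root b) (Sum.inl y) : ℝ))
        ((r.coroot b (d.e (Sum.inl y)) : ℝ))]
    | inr jj =>
      rw [hf]
      dsimp only
      rw [hcr jj]
      norm_num
  obtain ⟨p₁, hp₁, p₂, hp₂, hne, hf1, hf2⟩ :=
    exists_two_pos (d.e.repr (r.root b)).support f hsum hle
  have hinl : ∀ p ∈ (d.e.repr (r.root b)).support, (0:ℝ) < f p → ∃ z : ι, p = Sum.inl z := by
    intro p _ hp
    cases p with
    | inl z => exact ⟨z, rfl⟩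
    | inr jj => rw [hf] at hp; dsimp only at hp; rw [hcr jj] at hp; norm_num at hp
  obtain ⟨i, rfl⟩ := hinl p₁ hp₁ hf1
  obtain ⟨j, rfl⟩ := hinl p₂ hp₂ hf2
  have hij : i ≠ j := fun h => hne (by rw [h])
  set aR : ι → ℝ := fun z => ((d.e.repr (r.root b) (Sum.inl z) : ℝ)) with haR
  set cR : ι → ℝ := fun z => ((r.coroot b (d.e (Sum.inl z)) : ℝ)) with hcR
  have hoff : ∀ y z : ι, y ≠ z → cR z * aR y ≤ 0 := by
    intro y z hyz
    have := hC (Sum.inl z) y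
    rw [if_neg (by simpa using fun h => hyz (by simpa using h.symm))] at this
    exact this
  have hfi : 0 < cR i * aR i := by
    rw [hf] at hf1; dsimp only at hf1; rw [haR, hcR]; dsimp only; linarith [mul_comm (aR i) (cR i), hf1]
  have hfj : 0 < cR j * aR j := by
    rw [hf] at hf2; dsimp only at hf2; rw [haR, hcR]; dsimp only; linarith [mul_comm (aR j) (cR j), hf2]
  have hout := sign_lemma aR cR hoff hij hfi hfj
  -- sum concentrates on the two indices
  have hsub : ({Sum.inl i, Sum.inl j} : Finset (ι ⊕ η)) ⊆ (d.e.repr (r.root b)).support := by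
    intro p hp
    rcases Finset.mem_insert.mp hp with h | h
    · rw [h]; exact hp₁
    · rw [Finset.mem_singleton.mp h]; exact hp₂
  have hzero : ∀ p ∈ (d.e.repr (r.root b)).support,
      p ∉ ({Sum.inl i, Sum.inl j} : Finset (ι ⊕ η)) → f p = 0 := by
    intro p _ hp
    simp only [Finset.mem_insert, Finset.mem_singleton, not_or] at hp
    cases p with
    | inl z =>
      have hzi : z ≠ i := fun h => hp.1 (by rw [h])
      have hzj : z ≠ j := fun h => hp.2 (by rw [h])
      have := (hout z hzi hzj).1
      rw [hf]; dsimp only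
      rw [haR] at this; dsimp only at this
      rw [this, zero_mul]
    | inr jj =>
      rw [hf]; dsimp only; rw [hcr jj]; norm_num
  have hpairsum : f (Sum.inl i) + f (Sum.inl j) = 2 := by
    have := Finset.sum_subset hsub hzero
    rw [Finset.sum_pair hne] at this
    rw [this, hsum]
  have hii : f (Sum.inl i) = 1 := by
    have h1 := hle (Sum.inl i)
    have h2 := hle (Sum.inl j)
    linarith
  have hjj : f (Sum.inl j) = 1 := by
    have h1 := hle (Sum.inl i)
    linarith
  have hiiK : r.coroot b (d.e (Sum.inl i)) * d.e.repr (r.root b) (Sum.inl i) = 1 := by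
    rw [hf] at hii; dsimp only at hii
    have : ((r.coroot b (d.e (Sum.inl i)) * d.e.repr (r.root b) (Sum.inl i) : 𝕜) : ℝ)
        = ((1 : 𝕜) : ℝ) := by push_cast; linarith [hii]
    exact_mod_cast this
  have hjjK : r.coroot b (d.e (Sum.inl j)) * d.e.repr (r.root b) (Sum.inl j) = 1 := by
    rw [hf] at hjj; dsimp only at hjj
    have : ((r.coroot b (d.e (Sum.inl j)) * d.e.repr (r.root b) (Sum.inl j) : 𝕜) : ℝ)
        = ((1 : 𝕜) : ℝ) := by push_cast; linarith [hjj]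
    exact_mod_cast this
  have houtK : ∀ z : ι, z ≠ i → z ≠ j →
      r.coroot b (d.e (Sum.inl z)) = 0 ∧ d.e.repr (r.root b) (Sum.inl z) = 0 := by
    intro z hzi hzj
    obtain ⟨h1, h2⟩ := hout z hzi hzj
    rw [haR] at h1; rw [hcR] at h2; dsimp only at h1 h2
    constructor
    · exact_mod_cast h2
    · exact_mod_cast h1
  refine ⟨i, j, hij, hiiK, hjjK, houtK, ?_⟩
  ext z
  simp only [OrthantSetup.moved, OrthantSetup.X, Set.mem_setOf_eq, Set.mem_insert_iff,
    Set.mem_singleton_iff]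
  rw [r.simple_act]
  rw [Ne, sub_eq_self]
  constructor
  · intro hne0
    by_contra hcon
    push_neg at hcon
    have := (houtK z hcon.1 hcon.2).1
    rw [this, zero_smul] at hne0
    exact hne0 rfl
  · intro hzij hcon
    have hcne : r.coroot b (d.e (Sum.inl z)) ≠ 0 := by
      rcases hzij with h | h
      · rw [h]; exact left_ne_zero_of_mul_eq_one hiiK
      · rw [h]; exact left_ne_zero_of_mul_eq_one hjjK
    exact root_ne_smul_zero d b hcne hcon

end Aux2

section Generic
set_option synthInstance.maxHeartbeats 1000000
set_option maxHeartbeats 1000000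

lemma rescale_calc {𝕜 : Type*} [CommRing 𝕜] {V : Type*} [AddCommGroup V] [Module 𝕜 V]
    (s t : V ≃ₗ[𝕜] V) (x y α β h h' : V) (ci cj di ai aj bi bj : 𝕜)
    (hsx : s x = x - ci • α) (hsβ : s β = β - (ci * bi + cj * bj) • α)
    (htx : t x = x - di • β)
    (hα : α = ai • x + aj • y + h) (hβ : β = bi • x + bj • y + h')
    (h1 : ci * ai = 1) (h2 : cj * aj = 1) (h3 : di * bi = 1) :
    s (t x) = ((di * bj) * (cj * ai)) • x +
      ((di * (ci * bi + cj * bj) - ci) • h - di • h') := by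
  rw [htx, map_sub, map_smul, hsx, hsβ, hα, hβ]
  match_scalars
  · linear_combination (di * bi - 1) * h1
  · linear_combination (ci * aj) * h3 + (di * bj) * h2
  · ring
  · ring

lemma fix_of_pow_eq_one {𝕜 : Subring ℝ} {V : Type*} [AddCommGroup V] [Module 𝕜 V]
    {σ : Type*} (e : Module.Basis σ 𝕜 V) (u : V ≃ₗ[𝕜] V) (v hv : V) (q : 𝕜) (p₀ : σ)
    (huv : u v = q • v + hv) (huh : u hv = hv)
    (hq : 0 ≤ (q : ℝ)) (h1 : e.repr v p₀ = 1) (h0 : e.repr hv p₀ = 0)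
    {n : ℕ} (hn : n ≠ 0) (hun : u ^ n = 1) : q = 1 ∧ hv = 0 := by
  have hmul : ∀ (f g : V ≃ₗ[𝕜] V) (w : V), (f * g) w = f (g w) := fun _ _ _ => rfl
  have huhm : ∀ m : ℕ, (u ^ m) hv = hv := by
    intro m
    induction m with
    | zero => simp
    | succ m ih => rw [pow_succ, hmul, huh, ih]
  have hpow : ∀ m : ℕ, (u ^ m) v = (q ^ m) • v + (∑ l ∈ Finset.range m, q ^ l) • hv := by
    intro m
    induction m with
    | zero => simp
    | succ m ih =>
      rw [pow_succ, hmul, huv, map_add, map_smul, ih, huhm m, geom_sum_succ]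
      module
  have hvn : v = (q ^ n) • v + (∑ l ∈ Finset.range n, q ^ l) • hv := by
    have := hpow n
    rw [hun] at this
    simpa using this
  have hcoord := congrArg (fun w => e.repr w p₀) hvn
  simp only [map_add, map_smul, Finsupp.add_apply, Finsupp.smul_apply, smul_eq_mul,
    h1, h0, mul_one, mul_zero, add_zero] at hcoord
  have hqn : (q : ℝ) ^ n = 1 := by
    have : ((q ^ n : 𝕜) : ℝ) = ((1 : 𝕜) : ℝ) := by rw [← hcoord]
    push_cast at this
    simpa using this
  have hq1R : (q : ℝ) = 1 := by
    have := (pow_left_inj₀ hq zero_le_one hn).mp (by rw [hqn, one_pow])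
    exact this
  have hq1 : q = 1 := by exact_mod_cast hq1R
  refine ⟨hq1, ?_⟩
  have hsum : (∑ l ∈ Finset.range n, q ^ l) = (n : 𝕜) := by
    simp [hq1]
  have hsmul : (n : 𝕜) • hv = 0 := by
    have h' := hvn
    rw [hsum, hq1, one_pow, one_smul] at h'
    exact (left_eq_add.mp h')
  have hnK : (n : 𝕜) ≠ 0 := by
    intro hcon
    have : ((n : 𝕜) : ℝ) = 0 := by rw [hcon]; norm_cast
    push_cast at this
    exact hn (by exact_mod_cast this)
  have hrepr : e.repr hv = 0 := by
    refine Finsupp.ext fun p => ?_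
    have := congrArg (fun w => e.repr w p) hsmul
    simp only [map_smul, Finsupp.smul_apply, smul_eq_mul, map_zero, Finsupp.coe_zero,
      Pi.zero_apply] at this
    simpa using (mul_eq_zero.mp this).resolve_left hnK
  exact (LinearEquiv.map_eq_zero_iff e.repr).mp hrepr

end Generic

section Main

set_option synthInstance.maxHeartbeats 1000000
set_option maxHeartbeats 1000000

/-- If `W` preserves the almost-orthant for `k` spanned by `(X, H)` and two simple
reflections `s, t` satisfy `Xₛ = Xₜ` (equality of the sets of elements of `X` they move),
then either `st` acts trivially on `V` or the action of `st` on `V` has infinite order;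
moreover, if `k = ℤ` and `H = ∅`, then `st` acts trivially on `V`. -/
theorem double_edge_trivial_or_infinite_order
    {𝕜 k : Subring ℝ} {B W : Type*} [Group W] {M : CoxeterMatrix B}
    {cs : CoxeterSystem M W} {V : Type*} [AddCommGroup V] [Module 𝕜 V] [Module.Free 𝕜 V]
    {r : Realization 𝕜 M cs V} {ι η : Type*}
    (d : OrthantSetup 𝕜 k r ι η) (b b' : B)
    (hbb' : d.moved b = d.moved b') :
    (r.ρ (cs.simple b * cs.simple b') = 1 ∨
      ¬ IsOfFinOrder (r.ρ (cs.simple b * cs.simple b'))) ∧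
    (k = intSubring → IsEmpty η → r.ρ (cs.simple b * cs.simple b') = 1) := by
  classical
  obtain ⟨i, j, hij, hbii, hbjj, hbout, hbmov⟩ := reflection_structure d b
  obtain ⟨i', j', hij', hb'ii, hb'jj, hb'out, hb'mov⟩ := reflection_structure d b'
  have hpair : ({i, j} : Set ι) = {i', j'} := by rw [← hbmov, hbb', hb'mov]
  have hB' : (r.coroot b' (d.e (Sum.inl i)) * d.e.repr (r.root b') (Sum.inl i) = 1) ∧
      (r.coroot b' (d.e (Sum.inl j)) * d.e.repr (r.root b') (Sum.inl j) = 1) ∧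
      (∀ z : ι, z ≠ i → z ≠ j →
        r.coroot b' (d.e (Sum.inl z)) = 0 ∧ d.e.repr (r.root b') (Sum.inl z) = 0) := by
    have hmem : i' ∈ ({i, j} : Set ι) := by rw [hpair]; exact Set.mem_insert _ _
    have hmem2 : j' ∈ ({i, j} : Set ι) := by
      rw [hpair]; exact Set.mem_insert_of_mem _ rfl
    rcases Set.mem_insert_iff.mp hmem with h1 | h1
    · rcases Set.mem_insert_iff.mp hmem2 with h2 | h2
      · exact absurd (h1.trans h2.symm) hij'
      · rw [Set.mem_singleton_iff] at h2
        subst h1; subst h2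
        exact ⟨hb'ii, hb'jj, hb'out⟩
    · rw [Set.mem_singleton_iff] at h1
      rcases Set.mem_insert_iff.mp hmem2 with h2 | h2
      · subst h1; subst h2
        exact ⟨hb'jj, hb'ii, fun z hzi hzj => hb'out z hzj hzi⟩
      · rw [Set.mem_singleton_iff] at h2
        exact absurd (h1.trans h2.symm) hij'
  obtain ⟨hdii, hdjj, hdout⟩ := hB'
  -- shorthand names (as proofs only)
  -- the H-parts of the two roots
  have hinl1 : ∀ z : ι, d.e.repr (r.root b
      - d.e.repr (r.root b) (Sum.inl i) • d.e (Sum.inl i)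
      - d.e.repr (r.root b) (Sum.inl j) • d.e (Sum.inl j)) (Sum.inl z) = 0 := by
    intro z
    simp only [map_sub, Finsupp.sub_apply, map_smul, Finsupp.smul_apply, smul_eq_mul,
      Module.Basis.repr_self, Finsupp.single_apply]
    rcases eq_or_ne z i with rfl | hzi
    · rw [if_pos rfl, if_neg (by simpa using hij.symm)]
      ring
    · rcases eq_or_ne z j with rfl | hzj
      · rw [if_pos rfl, if_neg (by simpa using fun h : i = z => hzi h.symm)]
        ring
      · rw [if_neg (by simpa using fun h : i = z => hzi h.symm),
          if_neg (by simpa using fun h : j = z => hzj h.symm), (hbout z hzi hzj).2]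
        ring
  have hinl2 : ∀ z : ι, d.e.repr (r.root b'
      - d.e.repr (r.root b') (Sum.inl i) • d.e (Sum.inl i)
      - d.e.repr (r.root b') (Sum.inl j) • d.e (Sum.inl j)) (Sum.inl z) = 0 := by
    intro z
    simp only [map_sub, Finsupp.sub_apply, map_smul, Finsupp.smul_apply, smul_eq_mul,
      Module.Basis.repr_self, Finsupp.single_apply]
    rcases eq_or_ne z i with rfl | hzi
    · rw [if_pos rfl, if_neg (by simpa using hij.symm)]
      ring
    · rcases eq_or_ne z j with rfl | hzj
      · rw [if_pos rfl, if_neg (by simpa using fun h : i = z => hzi h.symm)]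
        ring
      · rw [if_neg (by simpa using fun h : i = z => hzi h.symm),
          if_neg (by simpa using fun h : j = z => hzj h.symm), (hdout z hzi hzj).2]
        ring
  have hco2 : r.coroot b (r.root b'
      - d.e.repr (r.root b') (Sum.inl i) • d.e (Sum.inl i)
      - d.e.repr (r.root b') (Sum.inl j) • d.e (Sum.inl j)) = 0 :=
    coroot_zero_of_inl_zero d b _ hinl2
  -- the key coroot value
  have hκ : r.coroot b (r.root b') =
      r.coroot b (d.e (Sum.inl i)) * d.e.repr (r.root b') (Sum.inl i)
      + r.coroot b (d.e (Sum.inl j)) * d.e.repr (r.root b') (Sum.inl j) := by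
    have hdecomp : r.root b' = d.e.repr (r.root b') (Sum.inl i) • d.e (Sum.inl i)
        + d.e.repr (r.root b') (Sum.inl j) • d.e (Sum.inl j)
        + (r.root b' - d.e.repr (r.root b') (Sum.inl i) • d.e (Sum.inl i)
          - d.e.repr (r.root b') (Sum.inl j) • d.e (Sum.inl j)) := by
      module
    conv_lhs => rw [hdecomp]
    rw [map_add, map_add, map_smul, map_smul, hco2, add_zero, smul_eq_mul, smul_eq_mul]
    ring
  have hsβ : r.ρ (cs.simple b) (r.root b') = r.root b'
      - (r.coroot b (d.e (Sum.inl i)) * d.e.repr (r.root b') (Sum.inl i)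
        + r.coroot b (d.e (Sum.inl j)) * d.e.repr (r.root b') (Sum.inl j)) • r.root b := by
    rw [r.simple_act, hκ]
  have hsβ' : r.ρ (cs.simple b) (r.root b') = r.root b'
      - (r.coroot b (d.e (Sum.inl j)) * d.e.repr (r.root b') (Sum.inl j)
        + r.coroot b (d.e (Sum.inl i)) * d.e.repr (r.root b') (Sum.inl i)) • r.root b := by
    rw [hsβ, add_comm (r.coroot b (d.e (Sum.inl i)) * d.e.repr (r.root b') (Sum.inl i))]
  have hcalc1 := rescale_calc (r.ρ (cs.simple b)) (r.ρ (cs.simple b'))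
    (d.e (Sum.inl i)) (d.e (Sum.inl j)) (r.root b) (r.root b')
    (r.root b - d.e.repr (r.root b) (Sum.inl i) • d.e (Sum.inl i)
      - d.e.repr (r.root b) (Sum.inl j) • d.e (Sum.inl j))
    (r.root b' - d.e.repr (r.root b') (Sum.inl i) • d.e (Sum.inl i)
      - d.e.repr (r.root b') (Sum.inl j) • d.e (Sum.inl j))
    (r.coroot b (d.e (Sum.inl i))) (r.coroot b (d.e (Sum.inl j)))
    (r.coroot b' (d.e (Sum.inl i)))
    (d.e.repr (r.root b) (Sum.inl i)) (d.e.repr (r.root b) (Sum.inl j))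
    (d.e.repr (r.root b') (Sum.inl i)) (d.e.repr (r.root b') (Sum.inl j))
    (r.simple_act b _) hsβ (r.simple_act b' _) (by module) (by module)
    hbii hbjj hdii
  have hcalc2 := rescale_calc (r.ρ (cs.simple b)) (r.ρ (cs.simple b'))
    (d.e (Sum.inl j)) (d.e (Sum.inl i)) (r.root b) (r.root b')
    (r.root b - d.e.repr (r.root b) (Sum.inl i) • d.e (Sum.inl i)
      - d.e.repr (r.root b) (Sum.inl j) • d.e (Sum.inl j))
    (r.root b' - d.e.repr (r.root b') (Sum.inl i) • d.e (Sum.inl i)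
      - d.e.repr (r.root b') (Sum.inl j) • d.e (Sum.inl j))
    (r.coroot b (d.e (Sum.inl j))) (r.coroot b (d.e (Sum.inl i)))
    (r.coroot b' (d.e (Sum.inl j)))
    (d.e.repr (r.root b) (Sum.inl j)) (d.e.repr (r.root b) (Sum.inl i))
    (d.e.repr (r.root b') (Sum.inl j)) (d.e.repr (r.root b') (Sum.inl i))
    (r.simple_act b _) hsβ' (r.simple_act b' _) (by module) (by module)
    hbjj hbii hdjj
  have huXi : r.ρ (cs.simple b * cs.simple b') (d.e (Sum.inl i)) =
      ((r.coroot b' (d.e (Sum.inl i)) * d.e.repr (r.root b') (Sum.inl j))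
        * (r.coroot b (d.e (Sum.inl j)) * d.e.repr (r.root b) (Sum.inl i))) • d.e (Sum.inl i)
      + ((r.coroot b' (d.e (Sum.inl i))
            * (r.coroot b (d.e (Sum.inl i)) * d.e.repr (r.root b') (Sum.inl i)
              + r.coroot b (d.e (Sum.inl j)) * d.e.repr (r.root b') (Sum.inl j))
          - r.coroot b (d.e (Sum.inl i))) •
          (r.root b - d.e.repr (r.root b) (Sum.inl i) • d.e (Sum.inl i)
            - d.e.repr (r.root b) (Sum.inl j) • d.e (Sum.inl j))
        - r.coroot b' (d.e (Sum.inl i)) •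
          (r.root b' - d.e.repr (r.root b') (Sum.inl i) • d.e (Sum.inl i)
            - d.e.repr (r.root b') (Sum.inl j) • d.e (Sum.inl j))) := by
    rw [map_mul]; exact hcalc1
  have huXj : r.ρ (cs.simple b * cs.simple b') (d.e (Sum.inl j)) =
      ((r.coroot b' (d.e (Sum.inl j)) * d.e.repr (r.root b') (Sum.inl i))
        * (r.coroot b (d.e (Sum.inl i)) * d.e.repr (r.root b) (Sum.inl j))) • d.e (Sum.inl j)
      + ((r.coroot b' (d.e (Sum.inl j))
            * (r.coroot b (d.e (Sum.inl j)) * d.e.repr (r.root b') (Sum.inl j)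
              + r.coroot b (d.e (Sum.inl i)) * d.e.repr (r.root b') (Sum.inl i))
          - r.coroot b (d.e (Sum.inl j))) •
          (r.root b - d.e.repr (r.root b) (Sum.inl i) • d.e (Sum.inl i)
            - d.e.repr (r.root b) (Sum.inl j) • d.e (Sum.inl j))
        - r.coroot b' (d.e (Sum.inl j)) •
          (r.root b' - d.e.repr (r.root b') (Sum.inl i) • d.e (Sum.inl i)
            - d.e.repr (r.root b') (Sum.inl j) • d.e (Sum.inl j))) := by
    rw [map_mul]; exact hcalc2
  -- the shift vectors have vanishing X-coordinates
  have hshift1 : ∀ (x y : 𝕜) (z : ι), d.e.repr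
      (x • (r.root b - d.e.repr (r.root b) (Sum.inl i) • d.e (Sum.inl i)
          - d.e.repr (r.root b) (Sum.inl j) • d.e (Sum.inl j))
        - y • (r.root b' - d.e.repr (r.root b') (Sum.inl i) • d.e (Sum.inl i)
          - d.e.repr (r.root b') (Sum.inl j) • d.e (Sum.inl j))) (Sum.inl z) = 0 := by
    intro x y z
    rw [map_sub, Finsupp.sub_apply, map_smul, map_smul, Finsupp.smul_apply,
      Finsupp.smul_apply, hinl1 z, hinl2 z, smul_zero, smul_zero, sub_zero]
  -- coordinates of the images
  have hreprUi : d.e.repr (r.ρ (cs.simple b * cs.simple b') (d.e (Sum.inl i))) (Sum.inl i)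
      = (r.coroot b' (d.e (Sum.inl i)) * d.e.repr (r.root b') (Sum.inl j))
        * (r.coroot b (d.e (Sum.inl j)) * d.e.repr (r.root b) (Sum.inl i)) := by
    rw [huXi, map_add, Finsupp.add_apply, map_smul, Finsupp.smul_apply, Module.Basis.repr_self,
      Finsupp.single_apply, if_pos rfl, hshift1 _ _ i, smul_eq_mul, mul_one, add_zero]
  have hreprUj : d.e.repr (r.ρ (cs.simple b * cs.simple b') (d.e (Sum.inl j))) (Sum.inl j)
      = (r.coroot b' (d.e (Sum.inl j)) * d.e.repr (r.root b') (Sum.inl i))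
        * (r.coroot b (d.e (Sum.inl i)) * d.e.repr (r.root b) (Sum.inl j)) := by
    rw [huXj, map_add, Finsupp.add_apply, map_smul, Finsupp.smul_apply, Module.Basis.repr_self,
      Finsupp.single_apply, if_pos rfl, hshift1 _ _ j, smul_eq_mul, mul_one, add_zero]
  have hqiK : (((r.coroot b' (d.e (Sum.inl i)) * d.e.repr (r.root b') (Sum.inl j))
      * (r.coroot b (d.e (Sum.inl j)) * d.e.repr (r.root b) (Sum.inl i)) : 𝕜) : ℝ) ∈ k := by
    have := d.lattice_stable (cs.simple b * cs.simple b') (d.e (Sum.inl i))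
      (basis_mem_orthant d _).1 (Sum.inl i)
    rwa [hreprUi] at this
  have hqjK : (((r.coroot b' (d.e (Sum.inl j)) * d.e.repr (r.root b') (Sum.inl i))
      * (r.coroot b (d.e (Sum.inl i)) * d.e.repr (r.root b) (Sum.inl j)) : 𝕜) : ℝ) ∈ k := by
    have := d.lattice_stable (cs.simple b * cs.simple b') (d.e (Sum.inl j))
      (basis_mem_orthant d _).1 (Sum.inl j)
    rwa [hreprUj] at this
  have hqiNN : (0:ℝ) ≤ (((r.coroot b' (d.e (Sum.inl i)) * d.e.repr (r.root b') (Sum.inl j))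
      * (r.coroot b (d.e (Sum.inl j)) * d.e.repr (r.root b) (Sum.inl i)) : 𝕜) : ℝ) := by
    have := (d.orthant_stable (cs.simple b * cs.simple b') (d.e (Sum.inl i))
      (basis_mem_orthant d _)).2 i
    rwa [hreprUi] at this
  have hqjNN : (0:ℝ) ≤ (((r.coroot b' (d.e (Sum.inl j)) * d.e.repr (r.root b') (Sum.inl i))
      * (r.coroot b (d.e (Sum.inl i)) * d.e.repr (r.root b) (Sum.inl j)) : 𝕜) : ℝ) := by
    have := (d.orthant_stable (cs.simple b * cs.simple b') (d.e (Sum.inl j))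
      (basis_mem_orthant d _)).2 j
    rwa [hreprUj] at this
  have hqq : ((r.coroot b' (d.e (Sum.inl i)) * d.e.repr (r.root b') (Sum.inl j))
      * (r.coroot b (d.e (Sum.inl j)) * d.e.repr (r.root b) (Sum.inl i)))
      * ((r.coroot b' (d.e (Sum.inl j)) * d.e.repr (r.root b') (Sum.inl i))
      * (r.coroot b (d.e (Sum.inl i)) * d.e.repr (r.root b) (Sum.inl j))) = 1 := by
    linear_combination (r.coroot b (d.e (Sum.inl j)) * d.e.repr (r.root b) (Sum.inl j)
        * (r.coroot b' (d.e (Sum.inl i)) * d.e.repr (r.root b') (Sum.inl i))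
        * (r.coroot b' (d.e (Sum.inl j)) * d.e.repr (r.root b') (Sum.inl j))) * hbii
      + ((r.coroot b' (d.e (Sum.inl i)) * d.e.repr (r.root b') (Sum.inl i))
        * (r.coroot b' (d.e (Sum.inl j)) * d.e.repr (r.root b') (Sum.inl j))) * hbjj
      + (r.coroot b' (d.e (Sum.inl j)) * d.e.repr (r.root b') (Sum.inl j)) * hdii
      + hdjj
  have huz : ∀ z : ι, z ≠ i → z ≠ j →
      r.ρ (cs.simple b * cs.simple b') (d.e (Sum.inl z)) = d.e (Sum.inl z) := by
    intro z hzi hzj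
    rw [map_mul]
    show r.ρ (cs.simple b) (r.ρ (cs.simple b') (d.e (Sum.inl z))) = _
    rw [r.simple_act b' (d.e (Sum.inl z)), (hdout z hzi hzj).1, zero_smul, sub_zero,
      r.simple_act b (d.e (Sum.inl z)), (hbout z hzi hzj).1, zero_smul, sub_zero]
  have main : r.ρ (cs.simple b * cs.simple b') (d.e (Sum.inl i)) = d.e (Sum.inl i) →
      r.ρ (cs.simple b * cs.simple b') (d.e (Sum.inl j)) = d.e (Sum.inl j) →
      r.ρ (cs.simple b * cs.simple b') = 1 := by
    intro H1 H2
    refine LinearEquiv.toLinearMap_injective (d.e.ext fun p => ?_)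
    cases p with
    | inl z =>
      rcases eq_or_ne z i with rfl | hzi
      · simpa using H1
      · rcases eq_or_ne z j with rfl | hzj
        · simpa using H2
        · simpa using huz z hzi hzj
    | inr jj => simpa using d.invariant jj (cs.simple b * cs.simple b')
  constructor
  · by_cases hfin : IsOfFinOrder (r.ρ (cs.simple b * cs.simple b'))
    · left
      have hn : orderOf (r.ρ (cs.simple b * cs.simple b')) ≠ 0 := hfin.orderOf_pos.ne'
      have hun := pow_orderOf_eq_one (r.ρ (cs.simple b * cs.simple b'))
      obtain ⟨hq1, hh1⟩ := fix_of_pow_eq_one d.e (r.ρ (cs.simple b * cs.simple b'))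
        (d.e (Sum.inl i)) _ _ (Sum.inl i) huXi
        (fix_of_inl_zero d _ (hshift1 _ _) (cs.simple b * cs.simple b'))
        hqiNN (by rw [Module.Basis.repr_self, Finsupp.single_apply, if_pos rfl])
        (hshift1 _ _ i) hn hun
      obtain ⟨hq2, hh2⟩ := fix_of_pow_eq_one d.e (r.ρ (cs.simple b * cs.simple b'))
        (d.e (Sum.inl j)) _ _ (Sum.inl j) huXj
        (fix_of_inl_zero d _ (hshift1 _ _) (cs.simple b * cs.simple b'))
        hqjNN (by rw [Module.Basis.repr_self, Finsupp.single_apply, if_pos rfl])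
        (hshift1 _ _ j) hn hun
      refine main ?_ ?_
      · rw [huXi, hq1, hh1, one_smul, add_zero]
      · rw [huXj, hq2, hh2, one_smul, add_zero]
    · right; exact hfin
  · intro hkZ hemp
    -- with η empty, the H-parts vanish
    have hzero1 : (r.root b - d.e.repr (r.root b) (Sum.inl i) • d.e (Sum.inl i)
        - d.e.repr (r.root b) (Sum.inl j) • d.e (Sum.inl j)) = 0 := by
      rw [← (LinearEquiv.map_eq_zero_iff d.e.repr)]
      refine Finsupp.ext fun p => ?_
      cases p with
      | inl z => simpa using hinl1 z
      | inr jj => exact (hemp.false jj).elim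
    have hzero2 : (r.root b' - d.e.repr (r.root b') (Sum.inl i) • d.e (Sum.inl i)
        - d.e.repr (r.root b') (Sum.inl j) • d.e (Sum.inl j)) = 0 := by
      rw [← (LinearEquiv.map_eq_zero_iff d.e.repr)]
      refine Finsupp.ext fun p => ?_
      cases p with
      | inl z => simpa using hinl2 z
      | inr jj => exact (hemp.false jj).elim
    -- the scaling factors are integers
    subst hkZ
    obtain ⟨m, hm⟩ := RingHom.mem_range.mp hqiK
    obtain ⟨m', hm'⟩ := RingHom.mem_range.mp hqjK
    simp only [Int.coe_castRingHom] at hm hm'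
    have hPm : ((r.coroot b' (d.e (Sum.inl i)) * d.e.repr (r.root b') (Sum.inl j))
        * (r.coroot b (d.e (Sum.inl j)) * d.e.repr (r.root b) (Sum.inl i)) : 𝕜) = (m : 𝕜) :=
      Subtype.coe_injective (by beta_reduce; rw [← hm]; push_cast; ring)
    have hQm : ((r.coroot b' (d.e (Sum.inl j)) * d.e.repr (r.root b') (Sum.inl i))
        * (r.coroot b (d.e (Sum.inl i)) * d.e.repr (r.root b) (Sum.inl j)) : 𝕜) = (m' : 𝕜) :=
      Subtype.coe_injective (by beta_reduce; rw [← hm']; push_cast; ring)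
    have hmm : m * m' = 1 := by
      have h' := hqq
      rw [hPm, hQm] at h'
      exact_mod_cast h'
    have hm0 : 0 ≤ m := by
      have : (0:ℝ) ≤ (m:ℝ) := by rw [hm]; exact hqiNN
      exact_mod_cast this
    have hm1 : m = 1 := by
      rcases Int.isUnit_iff.mp (IsUnit.of_mul_eq_one (a := m) m' hmm) with h | h
      · exact h
      · omega
    have hq1 : (r.coroot b' (d.e (Sum.inl i)) * d.e.repr (r.root b') (Sum.inl j))
        * (r.coroot b (d.e (Sum.inl j)) * d.e.repr (r.root b) (Sum.inl i)) = 1 := by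
      rw [hPm, hm1]
      exact_mod_cast rfl
    have hq2 : (r.coroot b' (d.e (Sum.inl j)) * d.e.repr (r.root b') (Sum.inl i))
        * (r.coroot b (d.e (Sum.inl i)) * d.e.repr (r.root b) (Sum.inl j)) = 1 := by
      rw [hq1, one_mul] at hqq
      exact hqq
    refine main ?_ ?_
    · rw [huXi, hq1, hzero1, hzero2, one_smul, smul_zero, smul_zero, sub_zero, add_zero]
    · rw [huXj, hq2, hzero1, hzero2, one_smul, smul_zero, smul_zero, sub_zero, add_zero]

end Main
end
end

section
/- Let W be a finite Coxeter group with Coxeter generating set S, acting faithfully on a realization V over a commutative domain 𝕜 ⊆ ℝ, and suppose W preserves a k-orthant. Then W is isomorphic to a finite direct product of symmetric groups W_C (one for each connected component C of the transposition graph, including trivial groups S_1), and as a representation of W, V is isomorphic to (⊕_C P_C) ⊕ Z, where P_C is the permutation representation of the symmetric group W_C inflated to W (the free 𝕜-module on a set permuted by W_C via its natural symmetric-group action, with the other factors acting trivially), and Z is a 𝕜-module on which W acts trivially. -/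
open Function

noncomputable section

variable {𝕜 : Subring ℝ}

universe uV
namespace OrthantProof
set_option maxHeartbeats 1000000
set_option synthInstance.maxHeartbeats 400000

open OrthantSetup Equiv

variable {𝕜 k : Subring ℝ} {B W : Type*} [Group W] {M : CoxeterMatrix B}
  {cs : CoxeterSystem M W} {V : Type*} [AddCommGroup V] [Module 𝕜 V]
  {r : Realization 𝕜 M cs V} {ι : Type*}

/-- The basis `X`, reindexed by `ι`. -/
noncomputable def fb (d : OrthantSetup 𝕜 k r ι Empty) : Module.Basis ι 𝕜 V :=
  d.e.reindex (Equiv.sumEmpty ι Empty)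

variable (d : OrthantSetup 𝕜 k r ι Empty)

lemma fb_apply (i : ι) : fb d i = d.e (Sum.inl i) := by
  simp [fb, Module.Basis.reindex_apply]

lemma fb_eq_X (i : ι) : fb d i = d.X i := fb_apply d i

lemma fb_repr (v : V) (i : ι) : (fb d).repr v i = d.e.repr v (Sum.inl i) := by
  simp [fb, Module.Basis.repr_reindex_apply]

lemma sum_inl_surj (p : ι ⊕ Empty) : ∃ i, p = Sum.inl i := by
  cases p with
  | inl i => exact ⟨i, rfl⟩
  | inr j => exact j.elim

lemma fb_mem_orthant (i : ι) : fb d i ∈ almostOrthant k d.e := by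
  classical
  constructor
  · intro p
    rw [fb_apply, d.e.repr_self, Finsupp.single_apply]
    split
    · simpa using one_mem k
    · simpa using zero_mem k
  · intro i'
    rw [fb_apply, d.e.repr_self, Finsupp.single_apply]
    split <;> simp

lemma coord_nonneg (w : W) (i p : ι) : 0 ≤ (((fb d).repr (r.ρ w (fb d i)) p : 𝕜) : ℝ) := by
  rw [fb_repr]
  exact (d.orthant_stable w _ (fb_mem_orthant d i)).2 p

lemma coord_mem (w : W) (i p : ι) : (((fb d).repr (r.ρ w (fb d i)) p : 𝕜) : ℝ) ∈ k := by
  rw [fb_repr]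
  exact (d.orthant_stable w _ (fb_mem_orthant d i)).1 (Sum.inl p)

lemma rho_mul_apply (w w' : W) (v : V) : r.ρ (w * w') v = r.ρ w (r.ρ w' v) := by
  rw [map_mul]; rfl

lemma rho_inv_apply (w : W) (v : V) : r.ρ w⁻¹ (r.ρ w v) = v := by
  rw [← rho_mul_apply, inv_mul_cancel, map_one]; rfl

/-- Uniqueness of a monomial decomposition. -/
lemma mono_unique {c c' : 𝕜} {p q : ι} (hc : c ≠ 0)
    (h : c • fb d p = c' • fb d q) : p = q ∧ c = c' := by
  have h1 := congrArg (fun v => (fb d).repr v p) h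
  have h2 := congrArg (fun v => (fb d).repr v q) h
  simp only [map_smul, Module.Basis.repr_self, Finsupp.smul_single, smul_eq_mul, mul_one,
    Finsupp.single_apply] at h1 h2
  by_cases hpq : p = q
  · subst hpq
    simp at h1
    exact ⟨rfl, h1⟩
  · simp [hpq, Ne.symm hpq] at h1
    exact absurd h1 hc

/-- Every `w ∈ W` acts on each basis vector as a positive multiple of a basis vector. -/
lemma exists_mono (w : W) (i : ι) :
    ∃ (p : ι) (c : 𝕜), 0 < (c : ℝ) ∧ (c : ℝ) ∈ k ∧ r.ρ w (fb d i) = c • fb d p := by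
  classical
  set f := fb d with hf
  set u := r.ρ w (f i) with hu
  set l := f.repr u with hl
  have hrw : ∀ v : V, r.ρ w (r.ρ w⁻¹ v) = v := by
    intro v
    have := rho_inv_apply (r := r) w⁻¹ v
    rwa [inv_inv] at this
  have key : ∀ q : ι, f.repr (f i) q = l.sum (fun p a => a * f.repr (r.ρ w⁻¹ (f p)) q) := by
    intro q
    conv_lhs => rw [← rho_inv_apply (r := r) w (f i), ← hu, ← f.linearCombination_repr u,
      Finsupp.linearCombination_apply]
    rw [map_finsuppSum, map_finsuppSum, Finsupp.sum_apply]
    refine Finsupp.sum_congr fun p _ => ?_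
    rw [map_smul, map_smul, Finsupp.smul_apply, smul_eq_mul]
  have keyR : ∀ q : ι, ((f.repr (f i) q : 𝕜) : ℝ)
      = ∑ p ∈ l.support, ((l p : 𝕜):ℝ) * ((f.repr (r.ρ w⁻¹ (f p)) q : 𝕜):ℝ) := by
    intro q
    rw [key q, Finsupp.sum]
    push_cast
    rfl
  have hlnn : ∀ p, 0 ≤ ((l p : 𝕜) : ℝ) := fun p => coord_nonneg d w i p
  have hbnn : ∀ p q, 0 ≤ ((f.repr (r.ρ w⁻¹ (f p)) q : 𝕜) : ℝ) :=
    fun p q => coord_nonneg d w⁻¹ p q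
  -- off-diagonal vanishing
  have hvanish : ∀ p ∈ l.support, ∀ q, q ≠ i → f.repr (r.ρ w⁻¹ (f p)) q = 0 := by
    intro p hp q hq
    have hsum : ∑ p ∈ l.support, ((l p : 𝕜):ℝ) * ((f.repr (r.ρ w⁻¹ (f p)) q : 𝕜):ℝ) = 0 := by
      rw [← keyR q]
      have : f.repr (f i) q = 0 := by
        rw [Module.Basis.repr_self, Finsupp.single_apply, if_neg (fun h => hq h.symm)]
      rw [this]; norm_num
    have hterm := (Finset.sum_eq_zero_iff_of_nonneg
      (fun p _ => mul_nonneg (hlnn p) (hbnn p q))).mp hsum p hp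
    have hlp : ((l p : 𝕜):ℝ) ≠ 0 := by
      have := Finsupp.mem_support_iff.mp hp
      exact_mod_cast fun h => this (by exact_mod_cast h)
    have : ((f.repr (r.ρ w⁻¹ (f p)) q : 𝕜):ℝ) = 0 := by
      rcases mul_eq_zero.mp hterm with h | h
      · exact absurd h hlp
      · exact h
    exact_mod_cast this
  -- each support element gives a multiple relation
  have hmult : ∀ p ∈ l.support, f p = (f.repr (r.ρ w⁻¹ (f p)) i) • u := by
    intro p hp
    have hvp : r.ρ w⁻¹ (f p) = (f.repr (r.ρ w⁻¹ (f p)) i) • f i := by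
      apply f.repr.injective
      ext q
      rw [map_smul, Finsupp.smul_apply, Module.Basis.repr_self, Finsupp.single_apply]
      by_cases hq : q = i
      · subst hq; simp
      · rw [hvanish p hp q hq, if_neg (fun h => hq h.symm)]
        simp
    calc f p = r.ρ w (r.ρ w⁻¹ (f p)) := (hrw _).symm
      _ = r.ρ w ((f.repr (r.ρ w⁻¹ (f p)) i) • f i) := by rw [← hvp]
      _ = (f.repr (r.ρ w⁻¹ (f p)) i) • u := by rw [map_smul]
  -- choose the distinguished support element
  have hsum1 : ∑ p ∈ l.support, ((l p : 𝕜):ℝ) * ((f.repr (r.ρ w⁻¹ (f p)) i : 𝕜):ℝ) = 1 := by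
    rw [← keyR i, Module.Basis.repr_self, Finsupp.single_apply, if_pos rfl]
    norm_num
  obtain ⟨p₀, hp₀, hne⟩ : ∃ p ∈ l.support,
      ((l p : 𝕜):ℝ) * ((f.repr (r.ρ w⁻¹ (f p)) i : 𝕜):ℝ) ≠ 0 := by
    apply Finset.exists_ne_zero_of_sum_ne_zero
    rw [hsum1]; norm_num
  have hB₀ : f.repr (r.ρ w⁻¹ (f p₀)) i ≠ 0 := by
    intro h
    rw [h] at hne
    simp at hne
  -- support is a singleton
  have hsub : ∀ p ∈ l.support, p = p₀ := by
    intro p hp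
    have h1 := hmult p hp
    have h2 := hmult p₀ hp₀
    generalize hA : f.repr (r.ρ w⁻¹ (f p)) i = a at h1
    generalize hBB : f.repr (r.ρ w⁻¹ (f p₀)) i = b at h2 hB₀
    have : b • f p = a • f p₀ := by
      rw [h1, h2, smul_smul, smul_smul, mul_comm]
    exact (mono_unique d hB₀ this).1
  refine ⟨p₀, l p₀, ?_, coord_mem d w i p₀, ?_⟩
  · rcases lt_or_eq_of_le (hlnn p₀) with h | h
    · exact h
    · exfalso
      apply Finsupp.mem_support_iff.mp hp₀
      exact_mod_cast h.symm
  · apply f.repr.injective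
    rw [map_smul, Module.Basis.repr_self, Finsupp.smul_single, smul_eq_mul, mul_one]
    ext q
    by_cases hq : q = p₀
    · subst hq; simp [hl]
    · rw [Finsupp.single_apply, if_neg (fun h => hq h.symm)]
      have : q ∉ l.support := fun h => hq (hsub q h)
      simpa [hl] using Finsupp.notMem_support_iff.mp this

/-- The index to which `w` sends basis vector `i`. -/
noncomputable def sigF (w : W) (i : ι) : ι := (exists_mono d w i).choose

/-- The positive scalar attached to the action of `w` on basis vector `i`. -/
noncomputable def cF (w : W) (i : ι) : 𝕜 := (exists_mono d w i).choose_spec.choose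

lemma cF_pos (w : W) (i : ι) : 0 < ((cF d w i : 𝕜) : ℝ) :=
  (exists_mono d w i).choose_spec.choose_spec.1

lemma cF_mem (w : W) (i : ι) : ((cF d w i : 𝕜) : ℝ) ∈ k :=
  (exists_mono d w i).choose_spec.choose_spec.2.1

lemma cF_ne_zero (w : W) (i : ι) : cF d w i ≠ 0 := by
  intro h
  have := cF_pos d w i
  rw [h] at this
  simp at this

lemma rho_eq (w : W) (i : ι) : r.ρ w (fb d i) = cF d w i • fb d (sigF d w i) :=
  (exists_mono d w i).choose_spec.choose_spec.2.2

lemma sig_one (i : ι) : sigF d (1 : W) i = i ∧ cF d (1 : W) i = 1 := by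
  have h : cF d (1 : W) i • fb d (sigF d (1 : W) i) = (1 : 𝕜) • fb d i := by
    rw [← rho_eq d 1 i, map_one, one_smul]; rfl
  have := mono_unique d (cF_ne_zero d 1 i) h
  exact ⟨this.1, this.2⟩

lemma sig_mul (w w' : W) (i : ι) :
    sigF d (w * w') i = sigF d w (sigF d w' i) ∧
      cF d (w * w') i = cF d w' i * cF d w (sigF d w' i) := by
  have h : cF d (w * w') i • fb d (sigF d (w * w') i)
      = (cF d w' i * cF d w (sigF d w' i)) • fb d (sigF d w (sigF d w' i)) := by
    rw [← rho_eq d (w * w') i, rho_mul_apply, rho_eq d w' i, map_smul, rho_eq d w,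
      smul_smul]
  have := mono_unique d (cF_ne_zero d (w * w') i) h
  exact ⟨this.1, this.2⟩

lemma sig_left_inv (w : W) (i : ι) : sigF d w⁻¹ (sigF d w i) = i := by
  have := (sig_mul d w⁻¹ w i).1
  rw [inv_mul_cancel] at this
  rw [← this, (sig_one d i).1]

lemma sig_right_inv (w : W) (i : ι) : sigF d w (sigF d w⁻¹ i) = i := by
  have := sig_left_inv d w⁻¹ i
  rwa [inv_inv] at this

/-- The permutation of the basis induced by `w`. -/
noncomputable def sigP (w : W) : Equiv.Perm ι :=
  ⟨sigF d w, sigF d w⁻¹, sig_left_inv d w, sig_right_inv d w⟩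

lemma sigP_apply (w : W) (i : ι) : sigP d w i = sigF d w i := rfl

lemma sigP_mul (w w' : W) : sigP d (w * w') = sigP d w * sigP d w' := by
  ext i
  exact (sig_mul d w w' i).1

lemma sigP_one : sigP d (1 : W) = 1 := by
  ext i
  exact (sig_one d i).1

/-- `σ̂` as a monoid hom `W →* Perm ι`. -/
noncomputable def sigHom : W →* Equiv.Perm ι where
  toFun := sigP d
  map_one' := sigP_one d
  map_mul' := sigP_mul d

lemma sigHom_apply (w : W) (i : ι) : sigHom d w i = sigF d w i := rfl

lemma cF_pow (w : W) (i : ι) (h : sigF d w i = i) :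
    ∀ n : ℕ, sigF d (w ^ n) i = i ∧ cF d (w ^ n) i = (cF d w i) ^ n := by
  intro n
  induction n with
  | zero => simpa using sig_one d i
  | succ n ih =>
    have hm := sig_mul d (w ^ n) w i
    rw [← pow_succ] at hm
    constructor
    · rw [hm.1, h, ih.1]
    · rw [hm.2, h, ih.2, pow_succ, mul_comm]

/-- If `w` fixes the index `i`, the attached scalar is `1`. -/
lemma cF_of_fixed [Finite W] (w : W) (i : ι) (h : sigF d w i = i) : cF d w i = 1 := by
  obtain ⟨n, hn, hw⟩ := (isOfFinOrder_of_finite w).exists_pow_eq_one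
  have h1 := (cF_pow d w i h n).2
  rw [hw, (sig_one d i).2] at h1
  have hR : ((cF d w i : 𝕜) : ℝ) ^ n = 1 := by
    have := congrArg (fun c : 𝕜 => (c : ℝ)) h1
    push_cast at this
    exact this.symm
  have hpos := cF_pos d w i
  have : ((cF d w i : 𝕜) : ℝ) = 1 := by
    rcases lt_trichotomy ((cF d w i : 𝕜) : ℝ) 1 with hlt | heq | hgt
    · exfalso
      have := pow_lt_one₀ (le_of_lt hpos) hlt (Nat.pos_iff_ne_zero.mp hn)
      rw [hR] at this
      exact lt_irrefl 1 this
    · exact heq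
    · exfalso
      have := one_lt_pow₀ hgt (Nat.pos_iff_ne_zero.mp hn)
      rw [hR] at this
      exact lt_irrefl 1 this
  exact_mod_cast this

lemma moved_iff [Finite W] (b : B) (i : ι) :
    i ∈ d.moved b ↔ sigF d (cs.simple b) i ≠ i := by
  constructor
  · intro h hσ
    apply h
    rw [← fb_eq_X, rho_eq d (cs.simple b) i, hσ, cF_of_fixed d _ _ hσ, one_smul]
  · intro hσ h
    rw [← fb_eq_X, rho_eq d (cs.simple b) i] at h
    have : cF d (cs.simple b) i • fb d (sigF d (cs.simple b) i) = (1:𝕜) • fb d i := by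
      rw [h, one_smul]
    exact hσ (mono_unique d (cF_ne_zero d _ _) this).1

lemma sig_simple_sq (b : B) (i : ι) :
    sigF d (cs.simple b) (sigF d (cs.simple b) i) = i := by
  have := (sig_mul d (cs.simple b) (cs.simple b) i).1
  rw [cs.simple_mul_simple_self, (sig_one d i).1] at this
  exact this.symm

/-- The key rank-one computation: a simple reflection moves at most one pair of basis
vectors. -/
lemma sig_simple_eq (b : B) {i z : ι}
    (hi : sigF d (cs.simple b) i ≠ i) (hz : sigF d (cs.simple b) z ≠ z) (hzi : z ≠ i) :
    sigF d (cs.simple b) z = i := by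
  classical
  have hui : r.ρ (cs.simple b) (fb d i) - fb d i = (-(r.coroot b (fb d i))) • r.root b := by
    rw [r.simple_act b, sub_sub_cancel_left, neg_smul]
  have huz : r.ρ (cs.simple b) (fb d z) - fb d z = (-(r.coroot b (fb d z))) • r.root b := by
    rw [r.simple_act b, sub_sub_cancel_left, neg_smul]
  by_cases hσz : sigF d (cs.simple b) z = i
  · exact hσz
  exfalso
  have huv : (-(r.coroot b (fb d z))) • (r.ρ (cs.simple b) (fb d i) - fb d i)
      = (-(r.coroot b (fb d i))) • (r.ρ (cs.simple b) (fb d z) - fb d z) := by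
    rw [hui, huz, smul_smul, smul_smul, mul_comm]
  have hc := congrArg (fun v => (fb d).repr v i) huv
  simp only [map_smul, map_sub, Finsupp.smul_apply, Finsupp.sub_apply, smul_eq_mul] at hc
  rw [rho_eq d (cs.simple b) i, rho_eq d (cs.simple b) z] at hc
  simp only [map_smul, Finsupp.smul_apply, Module.Basis.repr_self, smul_eq_mul] at hc
  rw [Finsupp.single_apply, Finsupp.single_apply, Finsupp.single_apply,
    Finsupp.single_apply, if_neg hi, if_pos rfl, if_neg hσz, if_neg hzi] at hc
  simp only [mul_zero, zero_sub, mul_neg, mul_one, sub_zero] at hc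
  -- hc : -(-(coroot b (fb d z))) = -(coroot b (fb d i)) * 0  roughly; conclude β = 0
  have hβ : r.coroot b (fb d z) = 0 := by simpa using hc
  have hfix : r.ρ (cs.simple b) (fb d z) = fb d z := by
    have h0 := huz
    rw [hβ] at h0
    simp only [neg_zero, zero_smul] at h0
    rw [sub_eq_zero] at h0
    exact h0
  rw [rho_eq d (cs.simple b) z] at hfix
  have h1 : cF d (cs.simple b) z • fb d (sigF d (cs.simple b) z) = (1:𝕜) • fb d z := by
    rw [hfix, one_smul]
  exact hz (mono_unique d (cF_ne_zero d _ _) h1).1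

lemma simple_structure [Finite W] [DecidableEq ι] (b : B) :
    (∀ i, sigF d (cs.simple b) i = i) ∨
    ∃ i j, d.transGraph.Adj i j ∧ sigF d (cs.simple b) = Equiv.swap i j := by
  by_cases hall : ∀ i, sigF d (cs.simple b) i = i
  · exact Or.inl hall
  right
  push_neg at hall
  obtain ⟨i, hi⟩ := hall
  set j := sigF d (cs.simple b) i with hj
  have hji : j ≠ i := hi
  have hsj : sigF d (cs.simple b) j = i := by rw [hj]; exact sig_simple_sq d b i
  have hjm : sigF d (cs.simple b) j ≠ j := by rw [hsj]; exact Ne.symm hji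
  refine ⟨i, j, ⟨Ne.symm hji, b, (moved_iff d b i).mpr hi, (moved_iff d b j).mpr hjm⟩, ?_⟩
  funext z
  by_cases hzi : z = i
  · subst hzi
    rw [Equiv.swap_apply_left]
  by_cases hzj : z = j
  · subst hzj
    rw [Equiv.swap_apply_right, hsj]
  rw [Equiv.swap_apply_of_ne_of_ne hzi hzj]
  by_contra hz
  have hzi' := sig_simple_eq d b hi hz hzi
  apply hzj
  rw [← sig_simple_sq d b z, hzi', ← hj]

lemma mk_sig_simple [Finite W] (b : B) (x : ι) :
    d.transGraph.connectedComponentMk (sigF d (cs.simple b) x)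
      = d.transGraph.connectedComponentMk x := by
  classical
  rcases simple_structure d b with h | ⟨i, j, hadj, hswap⟩
  · rw [h x]
  rw [hswap]
  by_cases hxi : x = i
  · subst hxi
    rw [Equiv.swap_apply_left]
    exact (SimpleGraph.ConnectedComponent.connectedComponentMk_eq_of_adj hadj).symm
  by_cases hxj : x = j
  · subst hxj
    rw [Equiv.swap_apply_right]
    exact SimpleGraph.ConnectedComponent.connectedComponentMk_eq_of_adj hadj
  rw [Equiv.swap_apply_of_ne_of_ne hxi hxj]

lemma mk_sig [Finite W] (w : W) (x : ι) :
    d.transGraph.connectedComponentMk (sigF d w x)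
      = d.transGraph.connectedComponentMk x := by
  let Pres : Subgroup W :=
    { carrier := {w | ∀ x, d.transGraph.connectedComponentMk (sigF d w x)
        = d.transGraph.connectedComponentMk x}
      one_mem' := by
        intro x
        rw [(sig_one d x).1]
      mul_mem' := by
        intro a b ha hb x
        rw [(sig_mul d a b x).1, ha, hb]
      inv_mem' := by
        intro a ha x
        have := ha (sigF d a⁻¹ x)
        rw [sig_right_inv d a x] at this
        exact this.symm }
  have hle : Subgroup.closure (Set.range cs.simple) ≤ Pres := by
    rw [Subgroup.closure_le]
    rintro _ ⟨b, rfl⟩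
    exact fun x => mk_sig_simple d b x
  rw [cs.subgroup_closure_range_simple] at hle
  exact hle (Subgroup.mem_top w) x

/-- The basepoint of the connected component of `i`. -/
noncomputable def base (i : ι) : ι := (d.transGraph.connectedComponentMk i).out

lemma mk_base (i : ι) :
    d.transGraph.connectedComponentMk (base d i) = d.transGraph.connectedComponentMk i :=
  (d.transGraph.connectedComponentMk i).out_eq

lemma base_eq_of_mk_eq {i j : ι}
    (h : d.transGraph.connectedComponentMk i = d.transGraph.connectedComponentMk j) :
    base d i = base d j := by
  unfold base
  rw [h]

lemma reach_exists [Finite W] {x y : ι} (h : d.transGraph.Reachable x y) :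
    ∃ w : W, sigF d w x = y := by
  classical
  obtain ⟨p⟩ := h
  induction p with
  | nil => exact ⟨1, (sig_one d _).1⟩
  | cons h p ih =>
    obtain ⟨w', hw'⟩ := ih
    obtain ⟨hne, b, hx, hm⟩ := h
    rw [moved_iff] at hx hm
    have hstep := sig_simple_eq d b hm hx hne
    exact ⟨w' * cs.simple b, by rw [(sig_mul d w' (cs.simple b) _).1, hstep, hw']⟩

lemma exists_t [Finite W] (i : ι) : ∃ w : W, sigF d w (base d i) = i :=
  reach_exists d (SimpleGraph.ConnectedComponent.eq.mp (mk_base d i))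

/-- A chosen group element carrying the basepoint of the component of `i` to `i`. -/
noncomputable def tF [Finite W] (i : ι) : W := (exists_t d i).choose

lemma tF_spec [Finite W] (i : ι) : sigF d (tF d i) (base d i) = i := (exists_t d i).choose_spec

lemma welldef [Finite W] {w w' : W} {x : ι} (h : sigF d w x = sigF d w' x) :
    cF d w x = cF d w' x := by
  have h1 : sigF d (w'⁻¹ * w) x = x := by
    rw [(sig_mul d w'⁻¹ w x).1, h, sig_left_inv]
  have h2 : cF d (w'⁻¹ * w) x = 1 := cF_of_fixed d _ _ h1
  have h3 : cF d w x = cF d (w' * (w'⁻¹ * w)) x := by rw [mul_inv_cancel_left]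
  rw [h3, (sig_mul d w' (w'⁻¹ * w) x).2, h2, one_mul, h1]

/-- The rescaling coefficient. -/
noncomputable def lam [Finite W] (i : ι) : 𝕜 := cF d (tF d i) (base d i)

lemma lam_mul_inv [Finite W] (i : ι) : lam d i * cF d (tF d i)⁻¹ i = 1 := by
  have h := (sig_mul d (tF d i)⁻¹ (tF d i) (base d i)).2
  rw [inv_mul_cancel, (sig_one d (base d i)).2, tF_spec] at h
  exact h.symm

lemma coboundary [Finite W] (w : W) (i : ι) :
    lam d (sigF d w i) = cF d w i * lam d i := by
  have hbase : base d (sigF d w i) = base d i := base_eq_of_mk_eq d (mk_sig d w i)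
  have h1 : sigF d (w * tF d i) (base d i) = sigF d w i := by
    rw [(sig_mul d w (tF d i) _).1, tF_spec]
  have h2 : sigF d (tF d (sigF d w i)) (base d i) = sigF d w i := by
    rw [← hbase, tF_spec]
  have h3 := welldef d (h2.trans h1.symm)
  unfold lam
  rw [hbase, h3, (sig_mul d w (tF d i) (base d i)).2, tF_spec, mul_comm]

/-- The rescaling coefficients as units of `𝕜`. -/
noncomputable def lamU [Finite W] (i : ι) : (𝕜 : Subring ℝ)ˣ where
  val := lam d i
  inv := cF d (tF d i)⁻¹ i
  val_inv := lam_mul_inv d i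
  inv_val := by rw [mul_comm]; exact lam_mul_inv d i

/-- The rescaled basis, on which `W` acts by permutations. -/
noncomputable def gb [Finite W] : Module.Basis ι 𝕜 V := (fb d).unitsSMul (lamU d)

lemma rho_gb [Finite W] (w : W) (i : ι) : r.ρ w (gb d i) = gb d (sigF d w i) := by
  rw [gb, Module.Basis.unitsSMul_apply, Module.Basis.unitsSMul_apply, Units.smul_def, Units.smul_def,
    map_smul, rho_eq d w i, smul_smul]
  congr 1
  show (lam d i) * cF d w i = lam d (sigF d w i)
  rw [coboundary d w i, mul_comm]

lemma gb_repr_rho [Finite W] (w : W) (v : V) :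
    (gb d).repr (r.ρ w v) = Finsupp.mapDomain (sigF d w) ((gb d).repr v) := by
  have key : ((gb d).repr.toLinearMap ∘ₗ (r.ρ w).toLinearMap)
      = (Finsupp.lmapDomain 𝕜 𝕜 (sigF d w)) ∘ₗ (gb d).repr.toLinearMap := by
    apply (gb d).ext
    intro i
    simp only [LinearMap.coe_comp, Function.comp_apply, LinearEquiv.coe_coe,
      Finsupp.lmapDomain_apply]
    rw [rho_gb d w i, Module.Basis.repr_self, Module.Basis.repr_self, Finsupp.mapDomain_single]
  exact congrArg (fun L => L v) key

/-- The homomorphism from `W` to the product of the symmetric groups of the connected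
components of the transposition graph. -/
noncomputable def PhiHom [Finite W] : W →* (Π c : d.transGraph.ConnectedComponent,
    Equiv.Perm {i : ι // d.transGraph.connectedComponentMk i = c}) where
  toFun w c := Equiv.Perm.subtypePerm (sigHom d w)
    (fun x => by rw [sigHom_apply, mk_sig d w x])
  map_one' := by
    funext c
    apply Equiv.ext
    intro x
    apply Subtype.ext
    show sigF d (1 : W) x.1 = x.1
    exact (sig_one d x.1).1
  map_mul' := by
    intro w w'
    funext c
    apply Equiv.ext
    intro x
    apply Subtype.ext
    show sigF d (w * w') x.1 = sigF d w (sigF d w' x.1)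
    exact (sig_mul d w w' x.1).1

lemma PhiHom_apply_val [Finite W] (w : W) (c : d.transGraph.ConnectedComponent)
    (x : {i : ι // d.transGraph.connectedComponentMk i = c}) :
    ((PhiHom d w c) x).1 = sigF d w x.1 := rfl

lemma PhiHom_injective [Finite W] (faithful : Function.Injective r.ρ) :
    Function.Injective (PhiHom d) := by
  rw [injective_iff_map_eq_one]
  intro w hw
  have hfix : ∀ i : ι, sigF d w i = i := by
    intro i
    have h1 := congrFun hw (d.transGraph.connectedComponentMk i)
    have h2 := congrArg (fun e => (e ⟨i, rfl⟩ : {x : ι //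
      d.transGraph.connectedComponentMk x = d.transGraph.connectedComponentMk i}).1) h1
    simpa [PhiHom_apply_val] using h2
  have hρ : r.ρ w = 1 := by
    have : ∀ v : V, r.ρ w v = v := by
      intro v
      have := gb_repr_rho d w v
      rw [show sigF d w = id from funext hfix, Finsupp.mapDomain_id] at this
      exact (gb d).repr.injective this
    exact LinearEquiv.toLinearMap_injective (LinearMap.ext this)
  apply faithful
  rw [hρ, map_one]

lemma adj_sig_swap [Finite W] [DecidableEq ι] {i j : ι} (h : d.transGraph.Adj i j) :
    ∃ b, sigHom d (cs.simple b) = Equiv.swap i j := by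
  obtain ⟨hne, b, hi, hj⟩ := h
  rw [moved_iff] at hi hj
  have hij : sigF d (cs.simple b) i = j := sig_simple_eq d b hj hi hne
  refine ⟨b, Equiv.ext fun z => ?_⟩
  show sigF d (cs.simple b) z = Equiv.swap i j z
  by_cases hzi : z = i
  · subst hzi; rw [Equiv.swap_apply_left, hij]
  by_cases hzj : z = j
  · subst hzj
    rw [Equiv.swap_apply_right, ← hij, sig_simple_sq]
  rw [Equiv.swap_apply_of_ne_of_ne hzi hzj]
  by_contra hz
  have hzi' := sig_simple_eq d b hi hz hzi
  apply hzj
  rw [← sig_simple_sq d b z, hzi', hij]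

variable (S : Set (Equiv.Perm ι))

/-- The generating set of same-component transpositions. -/
def swapSet [DecidableEq ι] : Set (Equiv.Perm ι) :=
  {f | ∃ i j, d.transGraph.Adj i j ∧ f = Equiv.swap i j}

lemma swapSet_isSwap [DecidableEq ι] : ∀ f ∈ swapSet d, f.IsSwap := by
  rintro f ⟨i, j, hadj, rfl⟩
  exact ⟨i, j, hadj.ne, rfl⟩

lemma swapSet_closure_le [Finite W] [DecidableEq ι] :
    Subgroup.closure (swapSet d) ≤ (sigHom d).range := by
  rw [Subgroup.closure_le]
  rintro f ⟨i, j, hadj, rfl⟩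
  obtain ⟨b, hb⟩ := adj_sig_swap d hadj
  exact ⟨cs.simple b, hb⟩

lemma reach_orbit [Finite W] [DecidableEq ι] {x y : ι} (h : d.transGraph.Reachable x y) :
    y ∈ MulAction.orbit (Subgroup.closure (swapSet d)) x := by
  obtain ⟨p⟩ := h
  induction p with
  | nil => exact MulAction.mem_orbit_self _
  | @cons a b' c' h p ih =>
    obtain ⟨g, hg⟩ := ih
    refine ⟨g * ⟨Equiv.swap a b', Subgroup.subset_closure ⟨_, _, h, rfl⟩⟩, ?_⟩
    show (g.1 * Equiv.swap a b') • a = c'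
    rw [mul_smul, Equiv.Perm.smul_def (Equiv.swap a b'), Equiv.swap_apply_left]
    exact hg

section Psi

variable [Finite W]

/-- The permutation of `ι` induced by an element of the product of symmetric groups. -/
noncomputable def PsiF (π : Π c : d.transGraph.ConnectedComponent,
    Equiv.Perm {i : ι // d.transGraph.connectedComponentMk i = c}) (i : ι) : ι :=
  (π (d.transGraph.connectedComponentMk i) ⟨i, rfl⟩).1

lemma psi_congr (π : Π c : d.transGraph.ConnectedComponent,
    Equiv.Perm {i : ι // d.transGraph.connectedComponentMk i = c})
    {c c' : d.transGraph.ConnectedComponent} (h : c = c')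
    (x : {i : ι // d.transGraph.connectedComponentMk i = c})
    (x' : {i : ι // d.transGraph.connectedComponentMk i = c'}) (hx : x.1 = x'.1) :
    ((π c) x).1 = ((π c') x').1 := by
  subst h
  rw [Subtype.ext hx]

lemma mk_PsiF (π : Π c : d.transGraph.ConnectedComponent,
    Equiv.Perm {i : ι // d.transGraph.connectedComponentMk i = c}) (i : ι) :
    d.transGraph.connectedComponentMk (PsiF d π i) = d.transGraph.connectedComponentMk i :=
  (π (d.transGraph.connectedComponentMk i) ⟨i, rfl⟩).2

lemma psi_left_inv (π : Π c : d.transGraph.ConnectedComponent,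
    Equiv.Perm {i : ι // d.transGraph.connectedComponentMk i = c}) (i : ι) :
    PsiF d π⁻¹ (PsiF d π i) = i := by
  have h1 : ((π⁻¹ (d.transGraph.connectedComponentMk (PsiF d π i))) ⟨PsiF d π i, rfl⟩).1
      = ((π⁻¹ (d.transGraph.connectedComponentMk i)) ⟨PsiF d π i, mk_PsiF d π i⟩).1 :=
    psi_congr d π⁻¹ (mk_PsiF d π i) _ _ rfl
  show ((π⁻¹ (d.transGraph.connectedComponentMk (PsiF d π i))) ⟨PsiF d π i, rfl⟩).1 = i
  rw [h1]
  have h2 : (⟨PsiF d π i, mk_PsiF d π i⟩ : {x : ι //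
      d.transGraph.connectedComponentMk x = d.transGraph.connectedComponentMk i})
      = (π (d.transGraph.connectedComponentMk i)) ⟨i, rfl⟩ := Subtype.ext rfl
  rw [h2, Pi.inv_apply, Equiv.Perm.inv_def, Equiv.symm_apply_apply]

/-- The permutation of `ι` induced by an element of the product of symmetric groups. -/
noncomputable def PsiE (π : Π c : d.transGraph.ConnectedComponent,
    Equiv.Perm {i : ι // d.transGraph.connectedComponentMk i = c}) : Equiv.Perm ι :=
  ⟨PsiF d π, PsiF d π⁻¹, psi_left_inv d π, by
    intro i
    have := psi_left_inv d π⁻¹ i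
    rwa [inv_inv] at this⟩

end Psi

section Fin

variable [Finite W]

lemma base_inj {i i' : ι}
    (h : d.transGraph.connectedComponentMk i = d.transGraph.connectedComponentMk i')
    (ht : tF d i = tF d i') : i = i' :=
  calc i = sigF d (tF d i) (base d i) := (tF_spec d i).symm
    _ = sigF d (tF d i') (base d i') := by rw [ht, base_eq_of_mk_eq d h]
    _ = i' := tF_spec d i'

lemma exists_adj_of_reachable {x y : ι} (h : d.transGraph.Reachable x y) (hne : x ≠ y) :
    ∃ m, d.transGraph.Adj x m := by
  obtain ⟨p⟩ := h
  cases p with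
  | nil => exact absurd rfl hne
  | cons h p => exact ⟨_, h⟩

lemma exists_swap_of_nontrivial [DecidableEq ι] (c : d.transGraph.ConnectedComponent)
    (h : Nontrivial {i : ι // d.transGraph.connectedComponentMk i = c}) :
    ∃ w : W, ∃ i j : ι, d.transGraph.connectedComponentMk i = c ∧
      d.transGraph.connectedComponentMk j = c ∧ i ≠ j ∧ sigHom d w = Equiv.swap i j := by
  obtain ⟨x, y, hxy⟩ := h
  have hR : d.transGraph.Reachable x.1 y.1 :=
    SimpleGraph.ConnectedComponent.eq.mp (x.2.trans y.2.symm)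
  have hne : x.1 ≠ y.1 := fun h => hxy (Subtype.ext h)
  obtain ⟨m, hm⟩ := exists_adj_of_reachable d hR hne
  obtain ⟨b, hb⟩ := adj_sig_swap d hm
  exact ⟨cs.simple b, x.1, m, x.2,
    (SimpleGraph.ConnectedComponent.connectedComponentMk_eq_of_adj hm).symm.trans x.2,
    hm.ne, hb⟩

lemma finN [DecidableEq ι] : Finite {c : d.transGraph.ConnectedComponent //
    Nontrivial {i : ι // d.transGraph.connectedComponentMk i = c}} := by
  apply Finite.of_injective (fun c => (exists_swap_of_nontrivial d c.1 c.2).choose)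
  intro c c' hcc
  beta_reduce at hcc
  obtain ⟨i, j, hi, hj, hij, hsw⟩ := (exists_swap_of_nontrivial d c.1 c.2).choose_spec
  obtain ⟨i', j', hi', hj', hne', hsw'⟩ := (exists_swap_of_nontrivial d c'.1 c'.2).choose_spec
  rw [hcc, hsw'] at hsw
  have hmoved : Equiv.swap i j i' ≠ i' := by
    rw [← hsw, Equiv.swap_apply_left]
    exact Ne.symm hne'
  apply Subtype.ext
  by_cases h1 : i' = i
  · rw [← hi', h1, hi]
  by_cases h2 : i' = j
  · rw [← hi', h2, hj]
  exact absurd (Equiv.swap_apply_of_ne_of_ne h1 h2) hmoved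

lemma finite_moved_set [DecidableEq ι] :
    {i : ι | Nontrivial {x : ι //
      d.transGraph.connectedComponentMk x = d.transGraph.connectedComponentMk i}}.Finite := by
  rw [← Set.finite_coe_iff]
  haveI := finN d
  apply Finite.of_injective (β := {c : d.transGraph.ConnectedComponent //
      Nontrivial {i : ι // d.transGraph.connectedComponentMk i = c}} × W)
    (fun x => (⟨d.transGraph.connectedComponentMk x.1, x.2⟩, tF d x.1))
  intro x y hxy
  have h1 := congrArg (fun p => p.1.1) hxy
  have h2 := congrArg (fun p => p.2) hxy
  exact Subtype.ext (base_inj d h1 h2)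

lemma PhiHom_surjective [DecidableEq ι] : Function.Surjective (PhiHom d) := by
  intro π
  have h1 : PsiE d π ∈ Subgroup.closure (swapSet d) := by
    rw [mem_closure_isSwap (swapSet_isSwap d)]
    constructor
    · apply Set.Finite.subset (finite_moved_set d)
      intro i hi
      have hne : PsiF d π i ≠ i := fun h => hi h
      exact ⟨⟨PsiF d π i, mk_PsiF d π i⟩, ⟨i, rfl⟩, fun hc => hne (congrArg Subtype.val hc)⟩
    · intro x
      exact reach_orbit d (SimpleGraph.ConnectedComponent.eq.mp (mk_PsiF d π x).symm)
  obtain ⟨w, hw⟩ := swapSet_closure_le d h1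
  refine ⟨w, ?_⟩
  funext c
  apply Equiv.ext
  intro x
  apply Subtype.ext
  have h2 : sigF d w x.1 = PsiF d π x.1 := congrFun (congrArg (fun e : Equiv.Perm ι => ⇑e) hw) x.1
  rw [PhiHom_apply_val, h2]
  exact psi_congr d π x.2 ⟨x.1, rfl⟩ x rfl

end Fin

/-- Adding a trivial factor to a module. -/
noncomputable def addPUnit {R : Type*} [Semiring R] (N : Type*) [AddCommMonoid N] [Module R N]
    (P : Type*) [AddCommGroup P] [Module R P] [Subsingleton P] : N ≃ₗ[R] N × P where
  toFun x := (x, 0)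
  invFun := Prod.fst
  map_add' x y := by
    show (x + y, (0:P)) = (x, (0:P)) + (y, (0:P))
    rw [Prod.mk_add_mk, add_zero]
  map_smul' c x := by
    show (c • x, (0:P)) = c • (x, (0:P))
    rw [Prod.smul_mk, smul_zero]
  left_inv x := rfl
  right_inv p := by
    cases p with
    | mk a b => exact congrArg (Prod.mk a) (Subsingleton.elim _ _)

lemma sigma_ext {c c' : d.transGraph.ConnectedComponent}
    (x : {i : ι // d.transGraph.connectedComponentMk i = c})
    (x' : {i : ι // d.transGraph.connectedComponentMk i = c'})
    (h : c = c') (hx : x.1 = x'.1) :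
    (⟨c, x⟩ : Σ c : d.transGraph.ConnectedComponent,
      {i : ι // d.transGraph.connectedComponentMk i = c}) = ⟨c', x'⟩ := by
  subst h
  rw [Subtype.ext hx]

/-- The reindexing equivalence decomposing `ι` into connected components. -/
noncomputable def qEquiv : ι ≃ Σ c : d.transGraph.ConnectedComponent,
    {i : ι // d.transGraph.connectedComponentMk i = c} :=
  (Equiv.sigmaFiberEquiv (d.transGraph.connectedComponentMk)).symm

lemma qEquiv_apply (i : ι) : qEquiv d i = ⟨d.transGraph.connectedComponentMk i, ⟨i, rfl⟩⟩ := rfl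

lemma final {V' : Type uV} [AddCommGroup V'] [Module 𝕜 V'] {r' : Realization 𝕜 M cs V'}
    (d : OrthantSetup 𝕜 k r' ι Empty) [Finite W] [DecidableEq ι]
    (faithful : Function.Injective r'.ρ) :
    ∃ (φ : W ≃* (Π c : d.transGraph.ConnectedComponent,
        Equiv.Perm {i : ι // d.transGraph.connectedComponentMk i = c}))
      (Z : ModuleCat.{uV} 𝕜)
      (ψ : V' ≃ₗ[𝕜] ((Σ c : d.transGraph.ConnectedComponent,
        {i : ι // d.transGraph.connectedComponentMk i = c}) →₀ 𝕜) × Z),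
      ∀ (w : W) (v : V'),
        ψ (r'.ρ w v) =
          (Finsupp.mapDomain (fun p => ⟨p.1, (φ w p.1) p.2⟩) (ψ v).1, (ψ v).2) := by
  refine ⟨MulEquiv.ofBijective (PhiHom d) ⟨PhiHom_injective d faithful, PhiHom_surjective d⟩,
    ModuleCat.of 𝕜 PUnit.{uV+1},
    LinearEquiv.trans ((gb d).reindex (qEquiv d)).repr
      (addPUnit (((Σ c : d.transGraph.ConnectedComponent,
        {i : ι // d.transGraph.connectedComponentMk i = c}) →₀ 𝕜)) PUnit.{uV+1}),
    fun w v => ?_⟩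
  rw [Prod.ext_iff]
  refine ⟨?_, Subsingleton.elim _ _⟩
  show ((gb d).reindex (qEquiv d)).repr (r'.ρ w v)
    = Finsupp.mapDomain _ (((gb d).reindex (qEquiv d)).repr v)
  rw [Module.Basis.repr_reindex, Module.Basis.repr_reindex, gb_repr_rho d w v, ← Finsupp.mapDomain_comp,
    ← Finsupp.mapDomain_comp]
  congr 1
  funext i
  simp only [Function.comp_apply]
  have h1 : qEquiv d (sigF d w i) = ⟨d.transGraph.connectedComponentMk (sigF d w i),
    ⟨sigF d w i, rfl⟩⟩ := rfl
  have h2 : qEquiv d i = ⟨d.transGraph.connectedComponentMk i, ⟨i, rfl⟩⟩ := rfl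
  rw [h1, h2]
  exact sigma_ext d _ _ (mk_sig d w i) rfl

end OrthantProof

set_option synthInstance.maxHeartbeats 400000 in
/-- If a finite Coxeter group `W` acts faithfully via a realization `V` over `𝕜 ⊆ ℝ` and
preserves a `k`-orthant (an `OrthantSetup` with empty `H`), then `W` is isomorphic to the
direct product, over the connected components `c` of the transposition graph, of the
symmetric groups on the vertex sets of the components (trivial groups `S₁` included), and
`V` is isomorphic, `W`-equivariantly, to `(⊕_C P_C) ⊕ Z`, where `P_C` is the permutation
representation of the symmetric group of the component `C` (the free `𝕜`-module on its
vertex set, permuted naturally, with the other factors acting trivially) and `Z` is a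
`𝕜`-module with trivial `W`-action.  The direct sum `⊕_C P_C` is encoded as finitely
supported functions on `Σ c, {vertices of c}`, on which `W` acts through the product of
symmetric groups by permuting coordinates. -/
theorem finite_coxeter_orthant_is_product_of_symmetric_groups
    {𝕜 k : Subring ℝ} {B W : Type*} [Group W] [Finite W] {M : CoxeterMatrix B}
    {cs : CoxeterSystem M W} {V : Type uV} [AddCommGroup V] [Module 𝕜 V] [Module.Free 𝕜 V]
    {r : Realization 𝕜 M cs V} {ι : Type*}
    (d : OrthantSetup 𝕜 k r ι Empty)
    (faithful : Function.Injective r.ρ) :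
    ∃ (φ : W ≃* (Π c : d.transGraph.ConnectedComponent,
        Equiv.Perm {i : ι // d.transGraph.connectedComponentMk i = c}))
      (Z : ModuleCat.{uV} 𝕜)
      (ψ : V ≃ₗ[𝕜] ((Σ c : d.transGraph.ConnectedComponent,
        {i : ι // d.transGraph.connectedComponentMk i = c}) →₀ 𝕜) × Z),
      ∀ (w : W) (v : V),
        ψ (r.ρ w v) =
          (Finsupp.mapDomain (fun p => ⟨p.1, (φ w p.1) p.2⟩) (ψ v).1, (ψ v).2) := by
  classical
  exact OrthantProof.final d faithful
end
end
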